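/- arXiv:2002.10031 — 4 statements merged into one kernel-verified Lean document; each statement's English description precedes it below -/
import Mathlib

section
/- Under the hypotheses on ρ̄ below, define ζ(z) = ∫₀^z √(μ(z')/ρ̄(z')) dz' for 0 ≤ z < z₊ and ζ₊ = ∫₀^{z₊} √(μ(z)/ρ̄(z)) dz (which is finite). Then there exists a real-analytic function Λ₂ on a neighborhood of 0 with Λ₂(0) = 0 such that ζ₊ − ζ(z) = 2 l √(ν g) · √(z₊ − z) · (1 + Λ₂(z₊ − z)) for all z in a left neighborhood of z₊; in particular (ζ₊ − ζ(z))/√(z₊ − z) → 2 l √(ν g) as z → z₊⁻. -/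
open Filter Set MeasureTheory intervalIntegral Real
open scoped ENNReal NNReal

lemma my_analyticAt_sqrt_one : AnalyticAt ℝ Real.sqrt 1 := by
  have hc : AnalyticAt ℂ (fun z : ℂ => z ^ ((1:ℂ)/2)) ((1:ℝ) : ℂ) := by
    apply (analyticAt_id).cpow analyticAt_const
    simp [Complex.one_mem_slitPlane]
  have h1 : AnalyticAt ℝ (fun t : ℝ => ((t : ℂ) ^ ((1:ℂ)/2)).re) 1 := by
    have h2 : AnalyticAt ℝ (fun t : ℝ => (t : ℂ)) 1 := Complex.ofRealCLM.analyticAt 1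
    have h3 : AnalyticAt ℝ (fun t : ℝ => (t : ℂ) ^ ((1:ℂ)/2)) 1 :=
      (hc.restrictScalars).comp h2
    exact (Complex.reCLM.analyticAt _).comp h3
  apply h1.congr
  have : ∀ᶠ t in nhds (1:ℝ), 0 < t := eventually_gt_nhds one_pos
  filter_upwards [this] with t ht
  have := Complex.ofReal_cpow ht.le (1/2)
  push_cast at this
  rw [← this]
  simp [Real.sqrt_eq_rpow]

lemma my_analyticAt_deriv {f : ℝ → ℝ} {x : ℝ} (hf : AnalyticAt ℝ f x) :
    AnalyticAt ℝ (deriv f) x := by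
  have h1 := hf.fderiv
  have h2 : AnalyticAt ℝ (fun y => (fderiv ℝ f y) 1) x :=
    ((ContinuousLinearMap.apply ℝ ℝ (1:ℝ)).analyticAt _).comp h1
  exact h2.congr (Filter.Eventually.of_forall fun y => (fderiv_apply_one_eq_deriv).symm)



set_option maxHeartbeats 2000000 in
/-- with `ζ(z) = ∫₀^z √(μ/ρ)` and `ζp = ∫₀^{zp} √(μ/ρ)` (finite), one has
`ζp - ζ(z) = 2 l √(ν g) √(zp - z) (1 + Λ₂(zp - z))` near `zp` for some analytic `Λ₂`
vanishing at `0`; in particular `(ζp - ζ(z))/√(zp - z) → 2 l √(ν g)` as `z → zp⁻`. -/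
theorem stmt_9 (g l ν C zp : ℝ)
    (hg : 0 < g) (hl : 0 < l) (hν : 1 < ν) (hC : 0 < C) (hzp : 0 < zp)
    (Λ : ℝ → ℝ) (hΛ : AnalyticAt ℝ Λ 0) (hΛ0 : Λ 0 = 0)
    (ρ : ℝ → ℝ)
    (hρsm : ContDiffOn ℝ (⊤ : ℕ∞) ρ (Set.Ico 0 zp))
    (hρpos : ∀ z ∈ Set.Ico (0:ℝ) zp, 0 < ρ z)
    (hρneg : ∀ z ∈ Set.Ico (0:ℝ) zp, deriv ρ z < 0)
    (hρform : ∃ ε > 0, ∀ z ∈ Set.Ioo (zp - ε) zp,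
      ρ z = C * (zp - z) ^ ν * (1 + Λ (zp - z)))
    (μ : ℝ → ℝ) (hμ : ∀ z, μ z = -(g * l ^ 2 * deriv ρ z))
    (ζ : ℝ → ℝ) (hζ : ∀ z, ζ z = ∫ t in (0:ℝ)..z, Real.sqrt (μ t / ρ t))
    (ζp : ℝ) (hζp : ζp = ∫ t in (0:ℝ)..zp, Real.sqrt (μ t / ρ t)) :
    ∃ Λ₂ : ℝ → ℝ, AnalyticAt ℝ Λ₂ 0 ∧ Λ₂ 0 = 0 ∧
      (∃ ε > 0, ∀ z ∈ Set.Ioo (zp - ε) zp,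
        ζp - ζ z = 2 * l * Real.sqrt (ν * g) * Real.sqrt (zp - z)
          * (1 + Λ₂ (zp - z))) ∧
      Filter.Tendsto (fun z => (ζp - ζ z) / Real.sqrt (zp - z))
        (nhdsWithin zp (Set.Iio zp)) (nhds (2 * l * Real.sqrt (ν * g))) := by
  obtain ⟨ε₀, hε₀, hform⟩ := hρform
  have hν0 : (0:ℝ) < ν := lt_trans one_pos hν
  set Λ' : ℝ → ℝ := deriv Λ with hΛ'def
  have hΛ' : AnalyticAt ℝ Λ' 0 := my_analyticAt_deriv hΛ
  set h : ℝ → ℝ := fun s => s * Λ' s / (ν * (1 + Λ s)) with hhdef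
  have hh : AnalyticAt ℝ h 0 := by
    apply (analyticAt_id.mul hΛ').div (analyticAt_const.mul (analyticAt_const.add hΛ))
    simp [hΛ0]; exact ne_of_gt hν0
  have hh0 : h 0 = 0 := by
    show (0:ℝ) * Λ' 0 / (ν * (1 + Λ 0)) = 0
    simp
  set k : ℝ → ℝ := fun s => Real.sqrt (1 + h s) - 1 with hkdef
  have hk : AnalyticAt ℝ k 0 := by
    apply AnalyticAt.sub _ analyticAt_const
    have h1 : AnalyticAt ℝ (fun s => 1 + h s) 0 := analyticAt_const.add hh
    have h2 : AnalyticAt ℝ Real.sqrt ((fun s => 1 + h s) 0) := by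
      show AnalyticAt ℝ Real.sqrt (1 + h 0)
      rw [hh0]; simpa using my_analyticAt_sqrt_one
    exact AnalyticAt.comp (g := Real.sqrt) (f := fun s => 1 + h s) h2 h1
  have hk0 : k 0 = 0 := by
    show Real.sqrt (1 + h 0) - 1 = 0
    rw [hh0]; simp
  -- power series of k
  obtain ⟨p, hp⟩ := hk
  obtain ⟨R, hpR⟩ := hp
  set c : ℕ → ℝ := fun n => p.coeff n with hcdef
  obtain ⟨t, ht0, htR⟩ : ∃ t : NNReal, 0 < (t : ℝ≥0∞) ∧ (t : ℝ≥0∞) < R :=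
    ENNReal.lt_iff_exists_nnreal_btwn.mp hpR.r_pos |>.imp fun t ⟨h1, h2⟩ => ⟨h1, h2⟩
  have ht0' : 0 < (t:ℝ) := by exact_mod_cast ht0
  have hcbound : ∀ n, |c n| ≤ ‖p n‖ := by
    intro n
    rw [FormalMultilinearSeries.norm_apply_eq_norm_coef]
    exact le_refl _
  have hpsum : Summable fun n => ‖p n‖ * (t:ℝ) ^ n :=
    p.summable_norm_mul_pow (lt_of_lt_of_le htR hpR.r_le)
  -- the series for Λ₂
  set q : FormalMultilinearSeries ℝ ℝ ℝ := fun n => ((2*(n:ℝ)+1))⁻¹ • p n with hqdef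
  have hqle : ∀ n, ‖q n‖ ≤ ‖p n‖ := by
    intro n
    rw [FormalMultilinearSeries.norm_apply_eq_norm_coef, FormalMultilinearSeries.norm_apply_eq_norm_coef]
    have h2 : q.coeff n = (2*(n:ℝ)+1)⁻¹ * p.coeff n := by
      show ((2*(n:ℝ)+1)⁻¹ • p n) 1 = _
      rw [ContinuousMultilinearMap.smul_apply, smul_eq_mul]; rfl
    rw [h2, Real.norm_eq_abs, Real.norm_eq_abs, abs_mul]
    have h3 : |(2*(n:ℝ)+1)⁻¹| ≤ 1 := by
      rw [abs_inv, abs_of_pos (by positivity), inv_le_one_iff₀]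
      right; linarith [Nat.cast_nonneg (α := ℝ) n]
    nlinarith [abs_nonneg (p.coeff n)]
  have hqrad : (t : ℝ≥0∞) ≤ q.radius := by
    apply q.le_radius_of_summable_norm
    apply Summable.of_nonneg_of_le (fun n => by positivity)
      (fun n => mul_le_mul_of_nonneg_right (hqle n) (by positivity)) hpsum
  have hqpos : 0 < q.radius := lt_of_lt_of_le ht0 hqrad
  set Λ₂ : ℝ → ℝ := q.sum with hΛ₂def
  have hΛ₂a : AnalyticAt ℝ Λ₂ 0 := (q.hasFPowerSeriesOnBall hqpos).analyticAt
  have hballmem : ∀ s : ℝ, |s| < (t:ℝ) → ∀ r : ℝ≥0∞, (t:ℝ≥0∞) ≤ r → s ∈ Metric.eball (0:ℝ) r := by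
    intro s hs r hr
    rw [mem_emetric_ball_zero_iff]
    refine lt_of_lt_of_le ?_ hr
    rw [enorm_eq_nnnorm, ENNReal.coe_lt_coe, ← NNReal.coe_lt_coe, coe_nnnorm, Real.norm_eq_abs]
    exact hs
  have hΛ₂sum : ∀ s : ℝ, |s| < (t:ℝ) →
      HasSum (fun n : ℕ => (2*(n:ℝ)+1)⁻¹ * (c n * s^n)) (Λ₂ s) := by
    intro s hs
    have h0 := (q.hasFPowerSeriesOnBall hqpos).hasSum (hballmem s hs _ hqrad)
    rw [zero_add] at h0
    have hterm : ∀ n : ℕ, ((q n) fun _ => s) = (2*(n:ℝ)+1)⁻¹ * (c n * s^n) := by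
      intro n
      show (((2*(n:ℝ)+1))⁻¹ • p n) (fun _ => s) = _
      rw [ContinuousMultilinearMap.smul_apply, FormalMultilinearSeries.apply_eq_pow_smul_coeff]
      show (2*(n:ℝ)+1)⁻¹ * (s ^ n * p.coeff n) = _
      ring
    rw [funext hterm] at h0
    exact h0
  have hc0 : c 0 = 0 := by
    have h1 := hpR.hasFPowerSeriesAt.coeff_zero (1 : Fin 0 → ℝ)
    rw [hk0] at h1
    exact h1
  have hΛ₂0 : Λ₂ 0 = 0 := by
    have h1 := hΛ₂sum 0 (by simpa using ht0')
    have h2 : (fun n : ℕ => (2*(n:ℝ)+1)⁻¹ * (c n * (0:ℝ)^n)) = fun _ => (0:ℝ) := by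
      funext n
      rcases n with _ | m
      · simp [hc0]
      · simp
    rw [h2] at h1
    exact (hasSum_zero.unique h1).symm
  have hksum : ∀ s : ℝ, |s| < (t:ℝ) → HasSum (fun n : ℕ => c n * s^n) (k s) := by
    intro s hs
    have h0 := hpR.hasSum (hballmem s hs _ htR.le)
    rw [zero_add] at h0
    have hterm : ∀ n : ℕ, ((p n) fun _ => s) = c n * s^n := by
      intro n
      rw [FormalMultilinearSeries.apply_eq_pow_smul_coeff]
      show s ^ n * p.coeff n = _
      ring
    rw [funext hterm] at h0
    exact h0
  have hsummable : ∀ s : ℝ, 0 ≤ s → s < (t:ℝ) → Summable (fun n : ℕ => |c n| * s^n) := by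
    intro s hs0 hst
    apply Summable.of_nonneg_of_le (fun n => by positivity) _ hpsum
    intro n
    apply mul_le_mul (hcbound n) (pow_le_pow_left₀ hs0 hst.le n) (by positivity) (norm_nonneg _)

  -- neighborhood conditions
  have hev1 : ∀ᶠ u in nhds (0:ℝ), DifferentiableAt ℝ Λ u :=
    (hΛ.eventually_analyticAt).mono fun u hu => hu.differentiableAt
  have hev2 : ∀ᶠ u in nhds (0:ℝ), 0 < 1 + Λ u := by
    have h2 : Tendsto Λ (nhds 0) (nhds 0) := by
      have := hΛ.continuousAt.tendsto; rwa [hΛ0] at this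
    exact (h2.eventually (eventually_gt_nhds (show (-1:ℝ) < 0 by norm_num))).mono
      fun u hu => by linarith
  have hev3 : ∀ᶠ u in nhds (0:ℝ), 0 < 1 + h u := by
    have h2 : Tendsto h (nhds 0) (nhds 0) := by
      have := hh.continuousAt.tendsto; rwa [hh0] at this
    exact (h2.eventually (eventually_gt_nhds (show (-1:ℝ) < 0 by norm_num))).mono
      fun u hu => by linarith
  have hev4 : ∀ᶠ u in nhds (0:ℝ), ContinuousAt k u := by
    apply (hh.eventually_analyticAt).mono
    intro u hu
    exact ((Real.continuous_sqrt.continuousAt).comp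
      (continuousAt_const.add hu.continuousAt)).sub continuousAt_const
  have hev5 : ∀ᶠ u in nhds (0:ℝ), |u| < (t:ℝ) := by
    have h2 : Tendsto (fun u : ℝ => |u|) (nhds 0) (nhds 0) := by
      simpa using continuous_abs.tendsto (0:ℝ)
    exact h2.eventually (eventually_lt_nhds ht0')
  obtain ⟨δ, hδ0, hδ⟩ := Metric.eventually_nhds_iff.mp
    (hev1.and (hev2.and (hev3.and (hev4.and hev5))))
  set ε : ℝ := min δ (min ε₀ zp) with hεdef
  have hε0 : 0 < ε := lt_min hδ0 (lt_min hε₀ hzp)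
  have hεδ : ε ≤ δ := min_le_left _ _
  have hεε₀ : ε ≤ ε₀ := le_trans (min_le_right _ _) (min_le_left _ _)
  have hεzp : ε ≤ zp := le_trans (min_le_right _ _) (min_le_right _ _)
  have hP : ∀ u : ℝ, |u| < ε → DifferentiableAt ℝ Λ u ∧ 0 < 1 + Λ u ∧ 0 < 1 + h u ∧
      ContinuousAt k u ∧ |u| < (t:ℝ) := by
    intro u hu
    exact hδ (by simpa [Real.dist_eq] using lt_of_lt_of_le hu hεδ)
  -- derivative of ρ near zp
  have hderiv : ∀ w ∈ Ioo (zp - ε) zp, HasDerivAt ρ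
      (-(C * (ν * (zp-w)^(ν-1) * (1 + Λ (zp-w)) + (zp-w)^ν * Λ' (zp-w)))) w := by
    intro w hw
    have hu0 : 0 < zp - w := by linarith [hw.2]
    have huε : |zp - w| < ε := by rw [abs_of_pos hu0]; linarith [hw.1]
    obtain ⟨hdΛ, -, -, -, -⟩ := hP _ huε
    have hinner : HasDerivAt (fun x : ℝ => zp - x) (-1) w := (hasDerivAt_id w).const_sub zp
    have hpow : HasDerivAt (fun x : ℝ => (zp - x) ^ ν) (ν * (zp-w)^(ν-1) * (-1)) w :=
      (Real.hasDerivAt_rpow_const (p := ν) (Or.inl (ne_of_gt hu0))).comp w hinner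
    have hlam : HasDerivAt (fun x : ℝ => 1 + Λ (zp - x)) (Λ' (zp - w) * (-1)) w :=
      ((hdΛ.hasDerivAt).comp w hinner).const_add 1
    have hφ : HasDerivAt (fun x : ℝ => C * ((zp - x) ^ ν * (1 + Λ (zp - x))))
        (C * ((ν * (zp-w)^(ν-1) * (-1)) * (1 + Λ (zp-w)) + (zp-w)^ν * (Λ' (zp-w) * (-1)))) w :=
      (hpow.mul hlam).const_mul C
    have heq : ρ =ᶠ[nhds w] fun x => C * ((zp - x) ^ ν * (1 + Λ (zp - x))) := by
      have hmem : Ioo (zp - ε₀) zp ∈ nhds w :=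
        isOpen_Ioo.mem_nhds ⟨by linarith [hw.1], hw.2⟩
      filter_upwards [hmem] with x hx
      rw [hform x hx]; ring
    have h2 := hφ.congr_of_eventuallyEq heq
    refine h2.congr_deriv ?_
    ring
  have hsqrtνg : Real.sqrt (g * l^2 * ν) = l * Real.sqrt (ν * g) := by
    rw [show g * l^2 * ν = l^2 * (ν * g) by ring, Real.sqrt_mul (sq_nonneg l),
      Real.sqrt_sq hl.le]
  -- pointwise formula for the integrand near zp
  have hsqrt : ∀ w ∈ Ioo (zp - ε) zp, Real.sqrt (μ w / ρ w)
      = l * Real.sqrt (ν * g) * ((1 + k (zp - w)) * (zp - w) ^ (-(1/2) : ℝ)) := by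
    intro w hw
    have hu0 : 0 < zp - w := by linarith [hw.2]
    set u : ℝ := zp - w with hudef
    have huε : |u| < ε := by rw [abs_of_pos hu0]; linarith [hw.1]
    obtain ⟨-, hΛpos, hhpos, -, -⟩ := hP _ huε
    have hρw : ρ w = C * u ^ ν * (1 + Λ u) := hform w ⟨by linarith [hw.1], hw.2⟩
    have hdw := (hderiv w hw).deriv
    have hμw : μ w = g * l^2 * (C * (ν * u^(ν-1) * (1 + Λ u) + u^ν * Λ' u)) := by
      rw [hμ w, hdw]; ring
    have hupow : u ^ ν = u ^ (ν - 1) * u := by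
      have h2 := Real.rpow_add hu0 (ν-1) 1
      rw [Real.rpow_one] at h2
      rw [show (ν - 1) + 1 = ν from by ring] at h2
      exact h2
    have hratio : μ w / ρ w = (g * l^2 * ν) * (1 + h u) / u := by
      rw [hμw, hρw, hupow]
      have h1 : (1 + Λ u) ≠ 0 := ne_of_gt hΛpos
      have h2 : u ≠ 0 := ne_of_gt hu0
      have h3 : u ^ (ν - 1) ≠ 0 := ne_of_gt (Real.rpow_pos_of_pos hu0 _)
      have h4 : C ≠ 0 := ne_of_gt hC
      have h5 : ν ≠ 0 := ne_of_gt hν0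
      show _ = g * l^2 * ν * (1 + u * Λ' u / (ν * (1 + Λ u))) / u
      field_simp
    rw [hratio, Real.sqrt_div (by positivity) u, Real.sqrt_mul (by positivity : (0:ℝ) ≤ g * l^2 * ν),
      hsqrtνg]
    have h6 : Real.sqrt (1 + h u) = 1 + k u := by
      show _ = 1 + (Real.sqrt (1 + h u) - 1); ring
    rw [h6, Real.rpow_neg hu0.le, ← Real.sqrt_eq_rpow, div_eq_mul_inv]
    ring

  have key : ∀ z ∈ Ioo (zp - ε) zp,
      ζp - ζ z = 2 * l * Real.sqrt (ν * g) * Real.sqrt (zp - z) * (1 + Λ₂ (zp - z)) := by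
    intro z hz
    have hs0 : 0 < zp - z := by linarith [hz.2]
    set s : ℝ := zp - z with hsdef
    have hsε : s < ε := by simp only [hsdef]; linarith [hz.1]
    have hst : s < (t:ℝ) := by
      have := (hP s (by rw [abs_of_pos hs0]; exact hsε)).2.2.2.2
      rwa [abs_of_pos hs0] at this
    have h0z : (0:ℝ) ≤ z := by linarith [hεzp]
    have hzzp : z < zp := hz.2
    -- continuity of k on [0, s]
    have hkcont : ContinuousOn k (Icc 0 s) := by
      intro u hu
      have h2 : |u| < ε := by rw [abs_of_nonneg hu.1]; exact lt_of_le_of_lt hu.2 hsε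
      exact ((hP u h2).2.2.2.1).continuousWithinAt
    -- integrability on [0, z]
    have hI1 : IntervalIntegrable (fun w => Real.sqrt (μ w / ρ w)) volume 0 z := by
      have hsub1 : Icc (0:ℝ) z ⊆ Ico 0 zp := fun x hx => ⟨hx.1, lt_of_le_of_lt hx.2 hzzp⟩
      have hdW : ContinuousOn (derivWithin ρ (Ico 0 zp)) (Ico 0 zp) :=
        hρsm.continuousOn_derivWithin (uniqueDiffOn_Ico 0 zp) (by simp)
      have hFcont : ContinuousOn
          (fun w => Real.sqrt (-(g * l^2 * derivWithin ρ (Ico 0 zp) w) / ρ w)) (Icc 0 z) := by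
        apply Real.continuous_sqrt.comp_continuousOn
        apply ContinuousOn.div
        · exact (continuousOn_const.mul (hdW.mono hsub1)).neg
        · exact (hρsm.continuousOn).mono hsub1
        · exact fun x hx => ne_of_gt (hρpos x (hsub1 hx))
      have hFii : IntervalIntegrable
          (fun w => Real.sqrt (-(g * l^2 * derivWithin ρ (Ico 0 zp) w) / ρ w)) volume 0 z := by
        apply ContinuousOn.intervalIntegrable
        rwa [Set.uIcc_of_le h0z]
      rw [intervalIntegrable_iff_integrableOn_Ioc_of_le h0z]
      apply ((intervalIntegrable_iff_integrableOn_Ioc_of_le h0z).mp hFii).congr_fun _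
        measurableSet_Ioc
      intro x hx
      have hx1 : x ∈ Ioo 0 zp := ⟨hx.1, lt_of_le_of_lt hx.2 hzzp⟩
      have hnh : Ico 0 zp ∈ nhds x :=
        mem_nhds_iff.mpr ⟨Ioo 0 zp, fun y hy => ⟨hy.1.le, hy.2⟩, isOpen_Ioo, hx1⟩
      show Real.sqrt (-(g * l^2 * derivWithin ρ (Ico 0 zp) x) / ρ x) = Real.sqrt (μ x / ρ x)
      rw [derivWithin_of_mem_nhds hnh, ← hμ x]
    -- integrability on [z, zp]
    have hEfint : IntervalIntegrable (fun u => (1 + k u) * u ^ (-(1/2):ℝ)) volume 0 s := by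
      apply (intervalIntegrable_rpow' (by norm_num)).continuousOn_mul
      rw [Set.uIcc_of_le hs0.le]
      exact continuousOn_const.add hkcont
    have hcomp : IntervalIntegrable (fun w => (1 + k (zp - w)) * (zp - w) ^ (-(1/2):ℝ))
        volume z zp := by
      have h2 := (hEfint.comp_sub_left zp).symm
      have h3 : zp - s = z := by rw [hsdef]; ring
      rw [h3, sub_zero] at h2
      exact h2
    have hI2 : IntervalIntegrable (fun w => Real.sqrt (μ w / ρ w)) volume z zp := by
      rw [intervalIntegrable_iff_integrableOn_Ioc_of_le hzzp.le,
        integrableOn_Ioc_iff_integrableOn_Ioo]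
      have hbase : IntegrableOn
          (fun w => l * Real.sqrt (ν*g) * ((1 + k (zp - w)) * (zp - w) ^ (-(1/2):ℝ)))
          (Ioo z zp) volume := by
        apply Integrable.const_mul
        exact ((intervalIntegrable_iff_integrableOn_Ioc_of_le hzzp.le).mp hcomp).mono_set
          Ioo_subset_Ioc_self
      apply hbase.congr_fun _ measurableSet_Ioo
      intro x hx
      exact (hsqrt x ⟨by linarith [hx.1, hz.1], hx.2⟩).symm
    have hsplit : ζp - ζ z = ∫ w in z..zp, Real.sqrt (μ w / ρ w) := by
      rw [hζ z, hζp, ← integral_add_adjacent_intervals hI1 hI2]; ring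
    -- replace integrand by explicit formula
    have hae : ∀ᵐ x : ℝ ∂(volume : Measure ℝ), x ≠ zp := by
      rw [ae_iff]
      have h2 : {x : ℝ | ¬ x ≠ zp} = {zp} := by ext x; simp
      rw [h2]
      exact measure_singleton zp
    have hv1 : ∫ w in z..zp, Real.sqrt (μ w / ρ w)
        = ∫ w in z..zp, l * Real.sqrt (ν*g) * ((1 + k (zp - w)) * (zp - w) ^ (-(1/2):ℝ)) := by
      apply intervalIntegral.integral_congr_ae
      filter_upwards [hae] with x hxne hxmem
      rw [Set.uIoc_of_le hzzp.le] at hxmem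
      exact hsqrt x ⟨by linarith [hxmem.1, hz.1], lt_of_le_of_ne hxmem.2 hxne⟩
    have hv2 : ∫ w in z..zp, l * Real.sqrt (ν*g) * ((1 + k (zp - w)) * (zp - w) ^ (-(1/2):ℝ))
        = l * Real.sqrt (ν*g) * ∫ u in (0:ℝ)..s, (1 + k u) * u ^ (-(1/2):ℝ) := by
      rw [intervalIntegral.integral_const_mul]
      congr 1
      have h2 := integral_comp_sub_left (a := z) (b := zp)
        (fun u => (1 + k u) * u ^ (-(1/2):ℝ)) zp
      simpa using h2
    have hrpow_int : ∀ n : ℕ, IntervalIntegrable (fun u : ℝ => u ^ ((n:ℝ) - 1/2)) volume 0 s :=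
      fun n => intervalIntegrable_rpow' (by
        have : (0:ℝ) ≤ n := Nat.cast_nonneg n
        linarith)
    have hsint : ∫ u in (0:ℝ)..s, u ^ (-(1/2):ℝ) = 2 * Real.sqrt s := by
      rw [integral_rpow (Or.inl (by norm_num)), Real.zero_rpow (by norm_num),
        show -(1/2:ℝ) + 1 = 1/2 by norm_num, ← Real.sqrt_eq_rpow]
      ring
    have hkrint : IntervalIntegrable (fun u => k u * u ^ (-(1/2):ℝ)) volume 0 s := by
      apply (intervalIntegrable_rpow' (by norm_num)).continuousOn_mul
      rwa [Set.uIcc_of_le hs0.le]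
    -- the power series integral
    have hs_half : ∀ n : ℕ, s ^ ((n:ℝ) + 1/2) = s ^ n * Real.sqrt s := by
      intro n
      rw [Real.rpow_add hs0, Real.rpow_natCast, Real.sqrt_eq_rpow]
    have hKint : ∫ u in (0:ℝ)..s, k u * u ^ (-(1/2):ℝ) = 2 * Real.sqrt s * Λ₂ s := by
      rw [integral_of_le hs0.le]
      set F : ℕ → ℝ → ℝ := fun n u => c n * (u ^ n * u ^ (-(1/2):ℝ)) with hFdef
      have hgval : ∀ n : ℕ, ∫ u in Ioc (0:ℝ) s, u ^ ((n:ℝ) - 1/2)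
          = s ^ ((n:ℝ) + 1/2) / ((n:ℝ) + 1/2) := by
        intro n
        have hn0 : (0:ℝ) ≤ n := Nat.cast_nonneg n
        rw [← integral_of_le hs0.le, integral_rpow (Or.inl (by linarith)),
          Real.zero_rpow (by intro hc; rw [show (n:ℝ) - 1/2 + 1 = (n:ℝ) + 1/2 by ring] at hc; linarith),
          show (n:ℝ) - 1/2 + 1 = (n:ℝ) + 1/2 by ring]
        ring_nf
      have hFeq : ∀ n : ℕ, EqOn (fun u : ℝ => c n * u ^ ((n:ℝ) - 1/2)) (F n) (Ioc 0 s) := by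
        intro n u hu
        simp only [hFdef]
        congr 1
        rw [show (n:ℝ) - 1/2 = (n:ℝ) + (-(1/2)) by ring, Real.rpow_add hu.1, Real.rpow_natCast]
      have hFint : ∀ n : ℕ, IntegrableOn (F n) (Ioc 0 s) volume := by
        intro n
        exact MeasureTheory.IntegrableOn.congr_fun
          (((intervalIntegrable_iff_integrableOn_Ioc_of_le hs0.le).mp
            (hrpow_int n)).const_mul (c n)) (hFeq n) measurableSet_Ioc
      have hFval : ∀ n : ℕ, ∫ u in Ioc (0:ℝ) s, F n u
          = c n * (s ^ ((n:ℝ) + 1/2) / ((n:ℝ) + 1/2)) := by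
        intro n
        rw [← setIntegral_congr_fun measurableSet_Ioc (hFeq n), MeasureTheory.integral_const_mul, hgval n]
      have hFnorm : ∀ n : ℕ, ∫ u in Ioc (0:ℝ) s, ‖F n u‖
          = |c n| * (s ^ ((n:ℝ) + 1/2) / ((n:ℝ) + 1/2)) := by
        intro n
        have h2 : EqOn (fun u : ℝ => ‖F n u‖) (fun u : ℝ => |c n| * u ^ ((n:ℝ) - 1/2))
            (Ioc 0 s) := by
          intro u hu
          show ‖F n u‖ = _
          rw [← hFeq n hu, Real.norm_eq_abs, abs_mul,
            abs_of_pos (Real.rpow_pos_of_pos hu.1 _)]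
        rw [setIntegral_congr_fun measurableSet_Ioc h2, MeasureTheory.integral_const_mul, hgval n]
      have hsummΛ : Summable (fun n : ℕ => ∫ u in Ioc (0:ℝ) s, ‖F n u‖) := by
        apply Summable.of_nonneg_of_le
          (fun n => integral_nonneg fun u => norm_nonneg _)
          (fun n => ?_) ((hsummable s hs0.le hst).mul_right (2 * Real.sqrt s))
        rw [hFnorm n, hs_half n]
        have hn0 : (0:ℝ) ≤ n := Nat.cast_nonneg n
        have h3 : 1 / ((n:ℝ) + 1/2) ≤ 2 := by
          rw [div_le_iff₀ (by linarith)]; linarith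
        have h4 : (0:ℝ) ≤ |c n| * s ^ n := by positivity
        have h5 : s ^ n * Real.sqrt s / ((n:ℝ) + 1/2)
            ≤ s ^ n * (2 * Real.sqrt s) := by
          rw [div_le_iff₀ (by linarith)]
          have h6 : (0:ℝ) ≤ s ^ n * Real.sqrt s := by positivity
          nlinarith [Real.sqrt_nonneg s, pow_nonneg hs0.le n]
        calc |c n| * (s ^ n * Real.sqrt s / ((n:ℝ) + 1/2))
            ≤ |c n| * (s ^ n * (2 * Real.sqrt s)) := by
              apply mul_le_mul_of_nonneg_left h5 (abs_nonneg _)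
          _ = |c n| * s ^ n * (2 * Real.sqrt s) := by ring
      have hswap := MeasureTheory.hasSum_integral_of_summable_integral_norm
        (μ := (volume : Measure ℝ).restrict (Ioc 0 s)) hFint hsummΛ
      have htsum : ∀ u ∈ Ioc (0:ℝ) s, (∑' n : ℕ, F n u) = k u * u ^ (-(1/2):ℝ) := by
        intro u hu
        have hut : |u| < (t:ℝ) := by
          rw [abs_of_pos hu.1]; exact lt_of_le_of_lt hu.2 hst
        have h2 := (hksum u hut).mul_right (u ^ (-(1/2):ℝ))
        rw [show (fun n : ℕ => c n * u ^ n * u ^ (-(1/2):ℝ)) = fun n : ℕ => F n u from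
          funext fun n => by simp only [hFdef]; ring] at h2
        exact h2.tsum_eq
      have hint_eq : (∫ u in Ioc (0:ℝ) s, ∑' n : ℕ, F n u)
          = ∫ u in Ioc (0:ℝ) s, k u * u ^ (-(1/2):ℝ) :=
        setIntegral_congr_fun measurableSet_Ioc htsum
      rw [hint_eq] at hswap
      have hΛside : HasSum (fun n : ℕ => ∫ u in Ioc (0:ℝ) s, F n u)
          (2 * Real.sqrt s * Λ₂ s) := by
        have h2 := (hΛ₂sum s (by rwa [abs_of_pos hs0])).mul_left (2 * Real.sqrt s)
        have h3 : (fun n : ℕ => 2 * Real.sqrt s * ((2*(n:ℝ)+1)⁻¹ * (c n * s^n)))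
            = fun n : ℕ => ∫ u in Ioc (0:ℝ) s, F n u := by
          funext n
          rw [hFval n, hs_half n]
          have hn0 : (0:ℝ) ≤ n := Nat.cast_nonneg n
          have h4 : (2*(n:ℝ)+1) ≠ 0 := by linarith
          have h5 : ((n:ℝ)+1/2) ≠ 0 := by linarith
          field_simp
        rwa [h3] at h2
      exact hswap.unique hΛside
    have hsplitint : ∫ u in (0:ℝ)..s, (1 + k u) * u ^ (-(1/2):ℝ)
        = 2 * Real.sqrt s + 2 * Real.sqrt s * Λ₂ s := by
      have e1 : EqOn (fun u : ℝ => (1 + k u) * u ^ (-(1/2):ℝ))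
          (fun u : ℝ => u ^ (-(1/2):ℝ) + k u * u ^ (-(1/2):ℝ)) (Set.uIcc 0 s) :=
        fun u _ => by ring
      rw [integral_congr e1, integral_add (intervalIntegrable_rpow' (by norm_num)) hkrint,
        hsint, hKint]
    rw [hsplit, hv1, hv2, hsplitint]
    ring

  refine ⟨Λ₂, hΛ₂a, hΛ₂0, ⟨ε, hε0, key⟩, ?_⟩
  have htend0 : Tendsto (fun z : ℝ => zp - z) (nhdsWithin zp (Iio zp)) (nhds 0) := by
    have h2 : Tendsto (fun z : ℝ => zp - z) (nhds zp) (nhds (zp - zp)) :=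
      (continuous_const.sub continuous_id).tendsto zp
    rw [sub_self] at h2
    exact h2.mono_left nhdsWithin_le_nhds
  have htendΛ₂ : Tendsto (fun z : ℝ => Λ₂ (zp - z)) (nhdsWithin zp (Iio zp)) (nhds 0) := by
    have h2 := hΛ₂a.continuousAt.tendsto
    rw [hΛ₂0] at h2
    exact h2.comp htend0
  have hlim : Tendsto (fun z : ℝ => 2 * l * Real.sqrt (ν*g) * (1 + Λ₂ (zp - z)))
      (nhdsWithin zp (Iio zp)) (nhds (2 * l * Real.sqrt (ν*g))) := by
    have h2 : Tendsto (fun z : ℝ => 1 + Λ₂ (zp - z)) (nhdsWithin zp (Iio zp)) (nhds 1) := by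
      have := tendsto_const_nhds (x := (1:ℝ)) (f := nhdsWithin zp (Iio zp)) |>.add htendΛ₂
      simpa using this
    have h3 := h2.const_mul (2 * l * Real.sqrt (ν*g))
    simpa using h3
  apply hlim.congr'
  have hmem : Ioo (zp - ε) zp ∈ nhdsWithin zp (Iio zp) :=
    Ioo_mem_nhdsLT_of_mem ⟨by linarith, le_refl zp⟩
  filter_upwards [hmem] with z hz
  have hs0 : 0 < zp - z := by linarith [hz.2]
  rw [key z hz, eq_div_iff (ne_of_gt (Real.sqrt_pos.mpr hs0))]
  ring
end

section
/- Under the hypotheses on ρ̄ below, define Q(z) = (ρ̄(z)/μ(z)) [ l² + (1/4) (d²/dz²) log(−ρ̄(z) ρ̄'(z)) − (1/16) ( (d/dz) log(−ρ̄(z) ρ̄'(z)) )² + (1/4) ( (d/dz) log ρ̄(z) ) ( (d/dz) log(−ρ̄(z) ρ̄'(z)) ) ] for z in a left neighborhood of z₊. Then: if ν ≠ 3/2, one has (z₊ − z) Q(z) → (2ν − 1)(2ν − 3)/(16 ν g l²) as z → z₊⁻; and if ν = 3/2, then Q is bounded on a left neighborhood of z₊ and extends continuously to z = z₊. -/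
noncomputable def sPfun (ν : ℝ) (Λ : ℝ → ℝ) : ℝ → ℝ := fun s => ν * (1 + Λ s) + s * deriv Λ s
noncomputable def sWfun (ν : ℝ) (Λ : ℝ → ℝ) : ℝ → ℝ := fun s => (1 + Λ s) * sPfun ν Λ s
noncomputable def sg1 (ν : ℝ) (Λ : ℝ → ℝ) : ℝ → ℝ := fun s => deriv (sWfun ν Λ) s / sWfun ν Λ s
noncomputable def sg2 (ν : ℝ) (Λ : ℝ → ℝ) : ℝ → ℝ := deriv (sg1 ν Λ)
noncomputable def shh (Λ : ℝ → ℝ) : ℝ → ℝ := fun s => deriv Λ s / (1 + Λ s)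

noncomputable def sCee (ν : ℝ) (Λ : ℝ → ℝ) : ℝ → ℝ := fun s =>
  -((2*ν-1) * sg1 ν Λ s)/8 + (ν * sg1 ν Λ s + (2*ν-1) * shh Λ s)/4
noncomputable def sDee (l ν : ℝ) (Λ : ℝ → ℝ) : ℝ → ℝ := fun s =>
  l^2 + sg2 ν Λ s/4 - (sg1 ν Λ s)^2/16 + shh Λ s * sg1 ν Λ s/4

noncomputable def sPhi (g l ν : ℝ) (Λ : ℝ → ℝ) : ℝ → ℝ := fun s =>
  ((1 + Λ s) / (g * l^2 * sPfun ν Λ s)) *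
    ((2*ν-1)*(2*ν-3)/16 / s + sCee ν Λ s + s * sDee l ν Λ s)

noncomputable def sPsi (g l ν : ℝ) (Λ : ℝ → ℝ) : ℝ → ℝ := fun s =>
  ((1 + Λ s) / (g * l^2 * sPfun ν Λ s)) *
    ((2*ν-1)*(2*ν-3)/16 + s * sCee ν Λ s + s^2 * sDee l ν Λ s)

lemma sphi_psi (g l ν : ℝ) (Λ : ℝ → ℝ) (s : ℝ) (hs : s ≠ 0) :
    s * sPhi g l ν Λ s = sPsi g l ν Λ s := by
  have key : ∀ K c d : ℝ, s * (K / s + c + s * d) = K + s * c + s^2 * d := by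
    intro K c d
    field_simp
  unfold sPhi sPsi
  rw [mul_left_comm, key]

/-- Pack of analyticity / positivity facts near 0. -/
lemma stmt10_pack (ν : ℝ) (hν : 0 < ν) (Λ : ℝ → ℝ) (hΛ : AnalyticAt ℝ Λ 0) (hΛ0 : Λ 0 = 0) :
    ∃ δ > 0, ∀ s ∈ Metric.ball (0:ℝ) δ,
      AnalyticAt ℝ Λ s ∧ AnalyticAt ℝ (deriv Λ) s ∧
      1/2 < 1 + Λ s ∧ ν/2 < sPfun ν Λ s ∧
      AnalyticAt ℝ (sWfun ν Λ) s ∧ AnalyticAt ℝ (sg1 ν Λ) s ∧ AnalyticAt ℝ (sg2 ν Λ) s := by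
  obtain ⟨δ₀, hδ₀, han⟩ : ∃ δ > 0, ∀ s ∈ Metric.ball (0:ℝ) δ, AnalyticAt ℝ Λ s := by
    have h := hΛ.eventually_analyticAt
    rw [Metric.eventually_nhds_iff_ball] at h
    exact h
  have hΛon : AnalyticOnNhd ℝ Λ (Metric.ball (0:ℝ) δ₀) := fun s hs => han s hs
  have hΛ'on : AnalyticOnNhd ℝ (deriv Λ) (Metric.ball (0:ℝ) δ₀) :=
    hΛon.deriv_of_isOpen Metric.isOpen_ball
  have hPon : AnalyticOnNhd ℝ (sPfun ν Λ) (Metric.ball (0:ℝ) δ₀) := by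
    intro s hs
    exact (analyticAt_const.mul (analyticAt_const.add (hΛon s hs))).add
      ((analyticAt_id).mul (hΛ'on s hs))
  have hWon : AnalyticOnNhd ℝ (sWfun ν Λ) (Metric.ball (0:ℝ) δ₀) := by
    intro s hs
    exact (analyticAt_const.add (hΛon s hs)).mul (hPon s hs)
  have hΛc : ContinuousAt Λ 0 := hΛ.continuousAt
  have hPc : ContinuousAt (sPfun ν Λ) 0 := (hPon 0 (Metric.mem_ball_self hδ₀)).continuousAt
  have hP0 : sPfun ν Λ 0 = ν := by simp [sPfun, hΛ0]
  have h1 : ∀ᶠ s in nhds (0:ℝ), 1/2 < 1 + Λ s := by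
    have : ∀ᶠ s in nhds (0:ℝ), Λ s ∈ Set.Ioi (-(1/2):ℝ) := by
      apply hΛc.eventually_mem
      rw [hΛ0]
      exact isOpen_Ioi.mem_nhds (Set.mem_Ioi.mpr (by norm_num))
    filter_upwards [this] with s hs
    simp only [Set.mem_Ioi] at hs; linarith
  have h2 : ∀ᶠ s in nhds (0:ℝ), ν/2 < sPfun ν Λ s := by
    have : ∀ᶠ s in nhds (0:ℝ), sPfun ν Λ s ∈ Set.Ioi (ν/2) := by
      apply hPc.eventually_mem
      rw [hP0]
      exact isOpen_Ioi.mem_nhds (Set.mem_Ioi.mpr (by linarith))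
    filter_upwards [this] with s hs using hs
  obtain ⟨δ₁, hδ₁, hball⟩ := Metric.eventually_nhds_iff_ball.mp (h1.and h2)
  refine ⟨min δ₀ δ₁, lt_min hδ₀ hδ₁, fun s hs => ?_⟩
  have hs0 : s ∈ Metric.ball (0:ℝ) δ₀ := Metric.ball_subset_ball (min_le_left _ _) hs
  have hs1 : s ∈ Metric.ball (0:ℝ) δ₁ := Metric.ball_subset_ball (min_le_right _ _) hs
  obtain ⟨hb1, hb2⟩ := hball s hs1
  have hg1on : AnalyticOnNhd ℝ (sg1 ν Λ) (Metric.ball (0:ℝ) (min δ₀ δ₁)) := by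
    intro t ht
    have ht0 : t ∈ Metric.ball (0:ℝ) δ₀ := Metric.ball_subset_ball (min_le_left _ _) ht
    have ht1 : t ∈ Metric.ball (0:ℝ) δ₁ := Metric.ball_subset_ball (min_le_right _ _) ht
    obtain ⟨hc1, hc2⟩ := hball t ht1
    have hWt : sWfun ν Λ t ≠ 0 := by
      have hp : 0 < sPfun ν Λ t := lt_trans (by linarith) hc2
      have h12 : (0:ℝ) < 1 + Λ t := by linarith
      exact ne_of_gt (mul_pos h12 hp)
    exact ((hWon.deriv_of_isOpen Metric.isOpen_ball) t ht0).div (hWon t ht0) hWt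
  exact ⟨han s hs0, hΛ'on s hs0, hb1, hb2, hWon s hs0,
    hg1on s hs, (hg1on.deriv_of_isOpen Metric.isOpen_ball) s hs⟩

/-- the Liouville potential in the original variable,
`Q = (ρ/μ)[l² + (1/4)(log(-ρρ'))'' - (1/16)((log(-ρρ'))')² + (1/4)(log ρ)'(log(-ρρ'))']`,
satisfies `(zp - z) Q(z) → (2ν-1)(2ν-3)/(16 ν g l²)` as `z → zp⁻` when `ν ≠ 3/2`, and is
bounded near `zp` with a continuous extension to `zp` when `ν = 3/2`. -/
theorem stmt_10 (g l ν C zp : ℝ)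
    (hg : 0 < g) (hl : 0 < l) (hν : 1 < ν) (hC : 0 < C) (hzp : 0 < zp)
    (Λ : ℝ → ℝ) (hΛ : AnalyticAt ℝ Λ 0) (hΛ0 : Λ 0 = 0)
    (ρ : ℝ → ℝ)
    (hρsm : ContDiffOn ℝ (⊤ : ℕ∞) ρ (Set.Ico 0 zp))
    (hρpos : ∀ z ∈ Set.Ico (0:ℝ) zp, 0 < ρ z)
    (hρneg : ∀ z ∈ Set.Ico (0:ℝ) zp, deriv ρ z < 0)
    (hρform : ∃ ε > 0, ∀ z ∈ Set.Ioo (zp - ε) zp,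
      ρ z = C * (zp - z) ^ ν * (1 + Λ (zp - z)))
    (μ : ℝ → ℝ) (hμ : ∀ z, μ z = -(g * l ^ 2 * deriv ρ z))
    (Q : ℝ → ℝ)
    (hQ : ∀ z ∈ Set.Ico (0:ℝ) zp, Q z =
      (ρ z / μ z) * (l ^ 2
        + (1/4) * deriv (deriv (fun z' => Real.log (-(ρ z' * deriv ρ z')))) z
        - (1/16) * (deriv (fun z' => Real.log (-(ρ z' * deriv ρ z'))) z) ^ 2
        + (1/4) * (deriv (fun z' => Real.log (ρ z')) z)
            * (deriv (fun z' => Real.log (-(ρ z' * deriv ρ z'))) z))) :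
    (ν ≠ 3/2 →
      Filter.Tendsto (fun z => (zp - z) * Q z) (nhdsWithin zp (Set.Iio zp))
        (nhds ((2*ν - 1) * (2*ν - 3) / (16 * ν * g * l ^ 2)))) ∧
    (ν = 3/2 →
      (∃ ε > 0, ∃ M : ℝ, ∀ z ∈ Set.Ioo (zp - ε) zp, |Q z| ≤ M) ∧
      ∃ L : ℝ, Filter.Tendsto Q (nhdsWithin zp (Set.Iio zp)) (nhds L)) := by
  have hν0 : (0:ℝ) < ν := lt_trans one_pos hν
  obtain ⟨δ, hδ, hpack⟩ := stmt10_pack ν hν0 Λ hΛ hΛ0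
  obtain ⟨ε₀, hε₀, hform⟩ := hρform
  set ε := min (min δ ε₀) zp with hεdef
  have hε : 0 < ε := lt_min (lt_min hδ hε₀) hzp
  have hεδ : ε ≤ δ := le_trans (min_le_left _ _) (min_le_left _ _)
  have hεε₀ : ε ≤ ε₀ := le_trans (min_le_left _ _) (min_le_right _ _)
  have hεzp : ε ≤ zp := min_le_right _ _
  have hmem : ∀ z ∈ Set.Ioo (zp - ε) zp,
      0 ≤ z ∧ 0 < zp - z ∧ (zp - z) ∈ Metric.ball (0:ℝ) δ ∧ z ∈ Set.Ioo (zp - ε₀) zp := by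
    intro z hz
    obtain ⟨hz1, hz2⟩ := hz
    have hs : 0 < zp - z := sub_pos.mpr hz2
    have hsε : zp - z < ε := by linarith
    refine ⟨by linarith, hs, ?_, ⟨by linarith, hz2⟩⟩
    rw [Metric.mem_ball, Real.dist_eq, sub_zero, abs_of_pos hs]
    linarith
  -- eventual equality with the explicit formula
  have hρev : ∀ z ∈ Set.Ioo (zp - ε) zp,
      ρ =ᶠ[nhds z] fun z' => C * (zp - z') ^ ν * (1 + Λ (zp - z')) := by
    intro z hz
    filter_upwards [isOpen_Ioo.mem_nhds hz] with z' hz'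
    exact hform z' (hmem z' hz').2.2.2
  -- derivative of ρ on the interval
  have hDρ : ∀ z ∈ Set.Ioo (zp - ε) zp,
      HasDerivAt ρ (-(C * (zp - z) ^ (ν - 1) * sPfun ν Λ (zp - z))) z := by
    intro z hz
    obtain ⟨hz0, hs, hsball, hz'⟩ := hmem z hz
    have h1 : HasDerivAt (fun z' : ℝ => zp - z') (-1) z := by
      simpa using (hasDerivAt_id z).const_sub zp
    have h2 : HasDerivAt (fun z' => (zp - z') ^ ν) (ν * (zp - z) ^ (ν - 1) * (-1)) z := by
      have := (Real.hasDerivAt_rpow_const (x := zp - z) (p := ν) (Or.inl hs.ne')).comp z h1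
      simpa [Function.comp_def] using this
    have h3 : HasDerivAt (fun z' => Λ (zp - z')) (deriv Λ (zp - z) * (-1)) z := by
      have := ((hpack _ hsball).1.differentiableAt.hasDerivAt).comp z h1
      simpa [Function.comp_def] using this
    have h4 : HasDerivAt (fun z' => C * (zp - z') ^ ν * (1 + Λ (zp - z')))
        (C * (ν * (zp - z) ^ (ν - 1) * (-1)) * (1 + Λ (zp - z))
          + C * (zp - z) ^ ν * (0 + deriv Λ (zp - z) * (-1))) z :=
      (h2.const_mul C).mul ((hasDerivAt_const z (1:ℝ)).add h3)
    have key : HasDerivAt (fun z' => C * (zp - z') ^ ν * (1 + Λ (zp - z')))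
        (-(C * (zp - z) ^ (ν - 1) * sPfun ν Λ (zp - z))) z := by
      convert h4 using 1
      have hsplit : (zp - z) ^ ν = (zp - z) ^ (ν - 1) * (zp - z) := by
        rw [← Real.rpow_add_one hs.ne' (ν - 1), sub_add_cancel]
      rw [hsplit]
      unfold sPfun
      ring
    exact key.congr_of_eventuallyEq (hρev z hz)
  have hdρ : ∀ z ∈ Set.Ioo (zp - ε) zp,
      deriv ρ z = -(C * (zp - z) ^ (ν - 1) * sPfun ν Λ (zp - z)) := fun z hz =>
    (hDρ z hz).deriv
  -- positivity facts
  have hval : ∀ z ∈ Set.Ioo (zp - ε) zp,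
      0 < 1 + Λ (zp - z) ∧ 0 < sPfun ν Λ (zp - z) ∧ 0 < sWfun ν Λ (zp - z) := by
    intro z hz
    obtain ⟨hz0, hs, hsball, hz'⟩ := hmem z hz
    obtain ⟨_, _, hb1, hb2, _⟩ := hpack _ hsball
    have hA : 0 < 1 + Λ (zp - z) := by linarith
    have hP : 0 < sPfun ν Λ (zp - z) := by linarith
    exact ⟨hA, hP, mul_pos hA hP⟩
  -- log of -(ρ ρ')
  have hf : ∀ z ∈ Set.Ioo (zp - ε) zp,
      Real.log (-(ρ z * deriv ρ z)) =
        Real.log (C ^ 2) + Real.log (sWfun ν Λ (zp - z)) + (2*ν - 1) * Real.log (zp - z) := by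
    intro z hz
    obtain ⟨hz0, hs, hsball, hz'⟩ := hmem z hz
    obtain ⟨hA, hP, hW⟩ := hval z hz
    have hpow : (zp - z) ^ ν * (zp - z) ^ (ν - 1) = (zp - z) ^ (2*ν - 1) := by
      rw [← Real.rpow_add hs]
      ring_nf
    have hNval : -(ρ z * deriv ρ z) = (C ^ 2 * sWfun ν Λ (zp - z)) * (zp - z) ^ (2*ν - 1) := by
      rw [hform z hz', hdρ z hz, ← hpow]
      unfold sWfun
      ring
    rw [hNval]
    have hC2W : (0:ℝ) < C ^ 2 * sWfun ν Λ (zp - z) := by positivity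
    have hrp : (0:ℝ) < (zp - z) ^ (2*ν - 1) := Real.rpow_pos_of_pos hs _
    rw [Real.log_mul hC2W.ne' hrp.ne', Real.log_mul (by positivity) hW.ne',
      Real.log_rpow hs]
    try ring
  -- first derivative of log(-(ρ ρ'))
  have hd1 : ∀ z ∈ Set.Ioo (zp - ε) zp,
      deriv (fun z' => Real.log (-(ρ z' * deriv ρ z'))) z
        = -(sg1 ν Λ (zp - z)) - (2*ν - 1)/(zp - z) := by
    intro z hz
    obtain ⟨hz0, hs, hsball, hz'⟩ := hmem z hz
    obtain ⟨hA, hP, hW⟩ := hval z hz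
    have hev : (fun z' => Real.log (-(ρ z' * deriv ρ z'))) =ᶠ[nhds z]
        (fun z' => Real.log (C ^ 2) + Real.log (sWfun ν Λ (zp - z'))
          + (2*ν - 1) * Real.log (zp - z')) := by
      filter_upwards [isOpen_Ioo.mem_nhds hz] with z' hz'
      exact hf z' hz'
    rw [hev.deriv_eq]
    have h1 : HasDerivAt (fun z' : ℝ => zp - z') (-1) z := by
      simpa using (hasDerivAt_id z).const_sub zp
    have hWd : HasDerivAt (fun z' => sWfun ν Λ (zp - z'))
        (deriv (sWfun ν Λ) (zp - z) * (-1)) z := by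
      have := ((hpack _ hsball).2.2.2.2.1.differentiableAt.hasDerivAt).comp z h1
      simpa [Function.comp_def] using this
    have hWl : HasDerivAt (fun z' => Real.log (sWfun ν Λ (zp - z')))
        (deriv (sWfun ν Λ) (zp - z) * (-1) / sWfun ν Λ (zp - z)) z := hWd.log hW.ne'
    have hlogs : HasDerivAt (fun z' => Real.log (zp - z')) (-1/(zp - z)) z := h1.log hs.ne'
    have total := ((hasDerivAt_const z (Real.log (C^2))).add hWl).add
      (hlogs.const_mul (2*ν - 1))
    erw [total.deriv]
    unfold sg1
    field_simp
    ring
  -- second derivative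
  have hd2 : ∀ z ∈ Set.Ioo (zp - ε) zp,
      deriv (deriv (fun z' => Real.log (-(ρ z' * deriv ρ z')))) z
        = sg2 ν Λ (zp - z) - (2*ν - 1)/(zp - z)^2 := by
    intro z hz
    obtain ⟨hz0, hs, hsball, hz'⟩ := hmem z hz
    have hev : deriv (fun z' => Real.log (-(ρ z' * deriv ρ z'))) =ᶠ[nhds z]
        (fun z' => -(sg1 ν Λ (zp - z')) - (2*ν - 1) * (zp - z')⁻¹) := by
      filter_upwards [isOpen_Ioo.mem_nhds hz] with z' hz'
      rw [hd1 z' hz']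
      ring
    rw [hev.deriv_eq]
    have h1 : HasDerivAt (fun z' : ℝ => zp - z') (-1) z := by
      simpa using (hasDerivAt_id z).const_sub zp
    have hg1d : HasDerivAt (fun z' => sg1 ν Λ (zp - z'))
        (deriv (sg1 ν Λ) (zp - z) * (-1)) z := by
      have := ((hpack _ hsball).2.2.2.2.2.1.differentiableAt.hasDerivAt).comp z h1
      simpa [Function.comp_def] using this
    have hinv : HasDerivAt (fun z' => (zp - z')⁻¹) (-(-1)/(zp - z)^2) z := h1.inv hs.ne'
    have total := (hg1d.neg).sub (hinv.const_mul (2*ν - 1))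
    erw [total.deriv]
    unfold sg2
    field_simp
    try ring
  -- derivative of log ρ
  have hd3 : ∀ z ∈ Set.Ioo (zp - ε) zp,
      deriv (fun z' => Real.log (ρ z')) z = -(shh Λ (zp - z)) - ν/(zp - z) := by
    intro z hz
    obtain ⟨hz0, hs, hsball, hz'⟩ := hmem z hz
    obtain ⟨hA, hP, hW⟩ := hval z hz
    have hev : (fun z' => Real.log (ρ z')) =ᶠ[nhds z]
        (fun z' => Real.log C + ν * Real.log (zp - z') + Real.log (1 + Λ (zp - z'))) := by
      filter_upwards [isOpen_Ioo.mem_nhds hz] with z' hz'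
      obtain ⟨hz'0, hs', hsball', hz''⟩ := hmem z' hz'
      obtain ⟨hA', hP', hW'⟩ := hval z' hz'
      rw [hform z' hz'']
      have hrp : (0:ℝ) < (zp - z') ^ ν := Real.rpow_pos_of_pos hs' _
      rw [Real.log_mul (by positivity) hA'.ne', Real.log_mul hC.ne' hrp.ne',
        Real.log_rpow hs']
    rw [hev.deriv_eq]
    have h1 : HasDerivAt (fun z' : ℝ => zp - z') (-1) z := by
      simpa using (hasDerivAt_id z).const_sub zp
    have h3 : HasDerivAt (fun z' => Λ (zp - z')) (deriv Λ (zp - z) * (-1)) z := by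
      have := ((hpack _ hsball).1.differentiableAt.hasDerivAt).comp z h1
      simpa [Function.comp_def] using this
    have hAl : HasDerivAt (fun z' => Real.log (1 + Λ (zp - z')))
        ((0 + deriv Λ (zp - z) * (-1)) / (1 + Λ (zp - z))) z :=
      ((hasDerivAt_const z (1:ℝ)).add h3).log hA.ne'
    have hlogs : HasDerivAt (fun z' => Real.log (zp - z')) (-1/(zp - z)) z := h1.log hs.ne'
    have total := (((hasDerivAt_const z (Real.log C)).add (hlogs.const_mul ν)).add hAl)
    erw [total.deriv]
    unfold shh
    field_simp
    ring
  -- main formula : Q = Phi ∘ (zp - ·)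
  have hQΦ : ∀ z ∈ Set.Ioo (zp - ε) zp, Q z = sPhi g l ν Λ (zp - z) := by
    intro z hz
    obtain ⟨hz0, hs, hsball, hz'⟩ := hmem z hz
    obtain ⟨hA, hP, hW⟩ := hval z hz
    have hsplit : (zp - z) ^ ν = (zp - z) ^ (ν - 1) * (zp - z) := by
      rw [← Real.rpow_add_one hs.ne' (ν - 1), sub_add_cancel]
    have ht : (0:ℝ) < (zp - z) ^ (ν - 1) := Real.rpow_pos_of_pos hs _
    rw [hQ z ⟨hz0, hz.2⟩, hd2 z hz, hd1 z hz, hd3 z hz, hμ z, hdρ z hz, hform z hz',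
      hsplit]
    unfold sPhi sCee sDee
    field_simp
    ring
  -- limit of s ↦ zp - z
  have hcomp : Filter.Tendsto (fun z => zp - z) (nhdsWithin zp (Set.Iio zp))
      (nhdsWithin 0 (Set.Ioi 0)) := by
    rw [tendsto_nhdsWithin_iff]
    constructor
    · have h : Filter.Tendsto (fun z : ℝ => zp - z) (nhds zp) (nhds (zp - zp)) :=
        tendsto_const_nhds.sub Filter.tendsto_id
      rw [sub_self] at h
      exact h.mono_left nhdsWithin_le_nhds
    · filter_upwards [self_mem_nhdsWithin] with z hz
      exact Set.mem_Ioi.mpr (sub_pos.mpr hz)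
  -- continuity of the pieces at 0
  obtain ⟨hΛ0a, hΛ'0a, _, _, hW0a, hg10a, hg20a⟩ := hpack 0 (Metric.mem_ball_self hδ)
  have hA0 : (1:ℝ) + Λ 0 = 1 := by rw [hΛ0]; norm_num
  have hP0 : sPfun ν Λ 0 = ν := by simp [sPfun, hΛ0]
  have hcontA : ContinuousAt (fun s => 1 + Λ s) 0 := continuousAt_const.add hΛ0a.continuousAt
  have hcontP : ContinuousAt (sPfun ν Λ) 0 := by
    apply ContinuousAt.add
    · exact continuousAt_const.mul hcontA
    · exact continuousAt_id.mul hΛ'0a.continuousAt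
  have hconthh : ContinuousAt (shh Λ) 0 := by
    apply ContinuousAt.div hΛ'0a.continuousAt hcontA
    rw [hA0]; norm_num
  have hcontC : ContinuousAt (sCee ν Λ) 0 := by
    apply ContinuousAt.add
    · exact (continuousAt_const.mul hg10a.continuousAt).neg.div_const _
    · exact ((continuousAt_const.mul hg10a.continuousAt).add
        (continuousAt_const.mul hconthh)).div_const _
  have hcontD : ContinuousAt (sDee l ν Λ) 0 := by
    apply ContinuousAt.add
    apply ContinuousAt.sub
    apply ContinuousAt.add continuousAt_const (hg20a.continuousAt.div_const _)
    · exact (hg10a.continuousAt.pow 2).div_const _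
    · exact (hconthh.mul hg10a.continuousAt).div_const _
  have hden : g * l^2 * sPfun ν Λ 0 ≠ 0 := by
    rw [hP0]; positivity
  have hcontΨ : ContinuousAt (sPsi g l ν Λ) 0 := by
    apply ContinuousAt.mul
    · exact hcontA.div (continuousAt_const.mul hcontP) hden
    · exact (continuousAt_const.add (continuousAt_id.mul hcontC)).add
        ((continuousAt_id.pow 2).mul hcontD)
  have hΨ0 : sPsi g l ν Λ 0 = (2*ν - 1) * (2*ν - 3) / (16 * ν * g * l ^ 2) := by
    unfold sPsi
    rw [hP0, hΛ0]
    rw [div_mul_eq_mul_div, div_eq_div_iff (by positivity) (by positivity)]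
    ring
  have hIooMem : Set.Ioo (zp - ε) zp ∈ nhdsWithin zp (Set.Iio zp) :=
    Ioo_mem_nhdsLT (by linarith)
  -- Part 1
  have hmain : Filter.Tendsto (fun z => (zp - z) * Q z) (nhdsWithin zp (Set.Iio zp))
      (nhds ((2*ν - 1) * (2*ν - 3) / (16 * ν * g * l ^ 2))) := by
    rw [← hΨ0]
    have hcwa : Filter.Tendsto (sPsi g l ν Λ) (nhdsWithin 0 (Set.Ioi 0))
        (nhds (sPsi g l ν Λ 0)) := hcontΨ.continuousWithinAt
    have htend : Filter.Tendsto (sPsi g l ν Λ ∘ (fun z => zp - z))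
        (nhdsWithin zp (Set.Iio zp)) (nhds (sPsi g l ν Λ 0)) := hcwa.comp hcomp
    apply Filter.Tendsto.congr' _ htend
    filter_upwards [hIooMem] with z hz
    have hs : 0 < zp - z := (hmem z hz).2.1
    rw [Function.comp_apply, ← sphi_psi g l ν Λ _ hs.ne', hQΦ z hz]
  refine ⟨fun _ => hmain, fun hν32 => ?_⟩
  -- Part 2 : ν = 3/2
  have hK2 : (2*ν - 1) * (2*ν - 3) / 16 = (0:ℝ) := by rw [hν32]; norm_num
  have hΦ2 : ∀ s : ℝ, sPhi g l ν Λ s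
      = ((1 + Λ s) / (g * l^2 * sPfun ν Λ s)) * (sCee ν Λ s + s * sDee l ν Λ s) := by
    intro s
    unfold sPhi
    rw [hK2, zero_div, zero_add]
  have hcontΦ2 : ContinuousAt (fun s : ℝ =>
      ((1 + Λ s) / (g * l^2 * sPfun ν Λ s)) * (sCee ν Λ s + s * sDee l ν Λ s)) 0 := by
    apply ContinuousAt.mul
    · exact hcontA.div (continuousAt_const.mul hcontP) hden
    · exact hcontC.add (continuousAt_id.mul hcontD)
  set L : ℝ := ((1 + Λ 0) / (g * l^2 * sPfun ν Λ 0)) * (sCee ν Λ 0 + 0 * sDee l ν Λ 0)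
    with hLdef
  have htendQ : Filter.Tendsto Q (nhdsWithin zp (Set.Iio zp)) (nhds L) := by
    have hcwa : Filter.Tendsto (fun s : ℝ =>
        ((1 + Λ s) / (g * l^2 * sPfun ν Λ s)) * (sCee ν Λ s + s * sDee l ν Λ s))
        (nhdsWithin 0 (Set.Ioi 0)) (nhds L) := hcontΦ2.continuousWithinAt
    have htend := hcwa.comp hcomp
    apply Filter.Tendsto.congr' _ htend
    filter_upwards [hIooMem] with z hz
    rw [Function.comp_apply, ← hΦ2, hQΦ z hz]
  refine ⟨?_, ⟨L, htendQ⟩⟩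
  have hball : Q ⁻¹' Metric.ball L 1 ∈ nhdsWithin zp (Set.Iio zp) :=
    htendQ (Metric.ball_mem_nhds L one_pos)
  obtain ⟨a, ha, hsub⟩ := mem_nhdsLT_iff_exists_Ioo_subset.mp hball
  refine ⟨zp - a, by simpa using (Set.mem_Iio.mp ha), |L| + 1, fun z hz => ?_⟩
  have hz' : z ∈ Set.Ioo a zp := by
    constructor
    · have := hz.1
      linarith [hz.1]
    · exact hz.2
  have hQz := hsub hz'
  rw [Set.mem_preimage, Metric.mem_ball, Real.dist_eq] at hQz
  calc |Q z| = |(Q z - L) + L| := by ring_nf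
    _ ≤ |Q z - L| + |L| := abs_add_le _ _
    _ ≤ |L| + 1 := by linarith
end

section
/- Let K ∈ ℝ and β > 0 with 4K + 1 > 0, set α₊ = (1 + √(4K+1))/2, and let f be a real-analytic function on a neighborhood of 0 with f(0) = 0. Let δ > 0 and define V(x) = x^{-2}(K + f(x^β)) for 0 < x < δ (assuming x^β lies in the domain of f). Then there exist δ' ∈ (0, δ] and a real-analytic function G on a neighborhood of 0 with G(0) = 1 such that the function φ₁(x) := x^{α₊} G(x^β) satisfies −φ₁''(x) + V(x) φ₁(x) = 0 for all 0 < x < δ'. -/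
/-!
Put `t = x ^ β`, `s = √(4K + 1) = 2α₊ - 1` and `θ = t d/dt`. For `φ(x) = x ^ α₊ G(x ^ β)` one
computes `φ'' = x ^ (α₊ - 2) (α₊(α₊ - 1) G + β(2α₊ + β - 1) θG + β² t² G'')`, and since
`α₊(α₊ - 1) = K` the equation `-φ'' + Vφ = 0` becomes `(β²θ² + βsθ) G = f G`. As `θ` multiplies
the `n`-th Taylor coefficient by `n`, writing `f = ∑ aₘ tᵐ` and `G = ∑ gₙ tⁿ` this is the
recursion `(β²n² + βsn) gₙ = ∑_{m ≤ n} aₘ g_{n-m}`. Because `a₀ = f 0 = 0` and `β²n² + βsn ≥ β²`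
for `n ≥ 1`, it determines `gₙ` from `g₀ = 1`, and a geometric bound `|aₘ| ≤ C ρ⁻ᵐ` propagates
by induction to `|gₙ| ≤ Mⁿ`, so `G` has a positive radius of convergence.
-/

open FormalMultilinearSeries Finset Filter Topology Real

section Coefficients

variable (a D : ℕ → ℝ)

noncomputable def frobeniusCoeff : ℕ → ℝ
  | 0 => 1
  | n + 1 => (∑ m ∈ range (n + 1), a (m + 1) * frobeniusCoeff (n - m)) / D (n + 1)
decreasing_by exact Nat.lt_succ_of_le (Nat.sub_le n m)

@[simp]
lemma frobeniusCoeff_zero : frobeniusCoeff a D 0 = 1 := by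
  rw [frobeniusCoeff]

lemma frobeniusCoeff_succ (n : ℕ) :
    frobeniusCoeff a D (n + 1)
      = (∑ m ∈ range (n + 1), a (m + 1) * frobeniusCoeff a D (n - m)) / D (n + 1) := by
  rw [frobeniusCoeff]

variable {a D}

lemma mul_frobeniusCoeff (ha : a 0 = 0) (hD₀ : D 0 = 0) (hD : ∀ n, D (n + 1) ≠ 0) (n : ℕ) :
    D n * frobeniusCoeff a D n = ∑ m ∈ range (n + 1), a m * frobeniusCoeff a D (n - m) := by
  cases n with
  | zero => simp [hD₀, ha]
  | succ n =>
    rw [frobeniusCoeff_succ, mul_div_cancel₀ _ (hD n),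
      sum_range_succ' (fun m ↦ a m * frobeniusCoeff a D (n + 1 - m)), ha, zero_mul, add_zero]
    refine sum_congr rfl fun m _ ↦ ?_
    rw [Nat.add_sub_add_right]

lemma abs_frobeniusCoeff_le_pow {C r c M : ℝ} (hr : 0 < r) (hc : 0 < c)
    (ha : ∀ m, |a m| ≤ C * r ^ m) (hD : ∀ n, c ≤ D (n + 1))
    (hrM : 2 * r ≤ M) (hCM : 2 * C * r / c ≤ M) (n : ℕ) :
    |frobeniusCoeff a D n| ≤ M ^ n := by
  induction n using Nat.strong_induction_on with
  | _ n ih =>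
  cases n with
  | zero => simp
  | succ n =>
  have hM : 0 < M := by linarith
  have hC : 0 ≤ C := by simpa using (abs_nonneg _).trans (ha 0)
  have hterm : ∀ m ∈ range (n + 1),
      |a (m + 1) * frobeniusCoeff a D (n - m)| ≤ C * r * M ^ n * (1 / 2) ^ m := by
    intro m hm
    have hmn : m + (n - m) = n := Nat.add_sub_cancel' (Nat.lt_succ_iff.mp (mem_range.mp hm))
    calc |a (m + 1) * frobeniusCoeff a D (n - m)|
        ≤ C * r ^ (m + 1) * M ^ (n - m) := by
          rw [abs_mul]
          exact mul_le_mul (ha _) (ih _ (by omega)) (abs_nonneg _) (by positivity)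
      _ = C * r * M ^ n * (r / M) ^ m := by
          rw [div_pow, pow_succ]; field_simp; rw [mul_assoc, ← pow_add, add_comm, hmn]
      _ ≤ C * r * M ^ n * (1 / 2) ^ m := by
          have : r / M ≤ 1 / 2 := by rw [div_le_iff₀ hM]; linarith
          gcongr
  have hsum : |∑ m ∈ range (n + 1), a (m + 1) * frobeniusCoeff a D (n - m)|
      ≤ 2 * C * r * M ^ n :=
    calc _ ≤ ∑ m ∈ range (n + 1), C * r * M ^ n * (1 / 2) ^ m :=
          (abs_sum_le_sum_abs _ _).trans (sum_le_sum hterm)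
      _ ≤ C * r * M ^ n * 2 := by
          rw [← mul_sum]; gcongr; exact sum_geometric_two_le _
      _ = 2 * C * r * M ^ n := by ring
  have hDpos : 0 < D (n + 1) := hc.trans_le (hD n)
  calc |frobeniusCoeff a D (n + 1)|
      = |∑ m ∈ range (n + 1), a (m + 1) * frobeniusCoeff a D (n - m)| / D (n + 1) := by
        rw [frobeniusCoeff_succ, abs_div, abs_of_pos hDpos]
    _ ≤ 2 * C * r * M ^ n / c := div_le_div₀ (by positivity) hsum hc (hD n)
    _ = 2 * C * r / c * M ^ n := by ring
    _ ≤ M ^ (n + 1) := by rw [pow_succ']; gcongr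

end Coefficients

section EulerOperator

variable {g : ℕ → ℝ}

lemma summable_norm_mul_pow_of_abs_le {c : ℕ → ℝ} {C r t : ℝ} (hr : 0 ≤ r)
    (hc : ∀ n, |c n| ≤ C * r ^ n) (ht : r * |t| < 1) :
    Summable fun n ↦ ‖c n * t ^ n‖ := by
  refine .of_nonneg_of_le (fun _ ↦ norm_nonneg _) (fun n ↦ ?_)
    ((summable_geometric_of_lt_one (by positivity) ht).mul_left C)
  rw [Real.norm_eq_abs, abs_mul, abs_pow, mul_pow, ← mul_assoc]
  gcongr
  exact hc n

lemma hasFPowerSeriesOnBall_ofScalars_sum {M : ℝ} (hM : 0 < M) (hg : ∀ n, |g n| ≤ M ^ n) :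
    HasFPowerSeriesOnBall (ofScalars ℝ g).sum (ofScalars ℝ g) 0 (ENNReal.ofReal M⁻¹) := by
  have hrad : ENNReal.ofReal M⁻¹ ≤ (ofScalars ℝ g).radius := by
    refine (ofScalars ℝ g).le_radius_of_bound 1 (r := M⁻¹.toNNReal) fun n ↦ ?_
    rw [ofScalars_norm, Real.norm_eq_abs, Real.coe_toNNReal _ (by positivity), inv_pow,
      ← div_eq_mul_inv]
    exact (div_le_one (by positivity)).mpr (hg n)
  exact ((ofScalars ℝ g).hasFPowerSeriesOnBall
    ((ENNReal.ofReal_pos.mpr (inv_pos.mpr hM)).trans_le hrad)).mono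
    (ENNReal.ofReal_pos.mpr (inv_pos.mpr hM)) hrad

lemma HasFPowerSeriesOnBall.hasSum_natCast_mul {G : ℝ → ℝ} {r : ENNReal}
    (h : HasFPowerSeriesOnBall G (ofScalars ℝ g) 0 r) {t : ℝ} (ht : t ∈ Metric.eball 0 r) :
    HasSum (fun n : ℕ ↦ (n : ℝ) * g n * t ^ n) (t * deriv G t) := by
  have hs := (ContinuousLinearMap.apply ℝ ℝ t).hasSum (h.fderiv.hasSum ht)
  simp only [ContinuousLinearMap.apply_apply, derivSeries_apply_diag, ofScalars_apply_eq,
    zero_add, nsmul_eq_mul, smul_eq_mul] at hs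
  have hderiv : fderiv ℝ G t t = t * deriv G t := by
    rw [← fderiv_apply_one_eq_deriv, ← smul_eq_mul t, ← map_smul, smul_eq_mul, mul_one]
  rw [hderiv] at hs
  refine (hasSum_nat_add_iff' 1).mp ?_
  simpa [mul_assoc] using hs

lemma hasSum_natCast_sq_mul_ofScalars_sum {M : ℝ} (hM : 0 < M) (hg : ∀ n, |g n| ≤ M ^ n)
    {t : ℝ} (ht : |t| < (2 * M)⁻¹) :
    HasSum (fun n : ℕ ↦ (n : ℝ) ^ 2 * g n * t ^ n)
      (t * deriv (ofScalars ℝ g).sum t + t ^ 2 * deriv (deriv (ofScalars ℝ g).sum) t) := by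
  set G := (ofScalars ℝ g).sum
  set H := (ofScalars ℝ fun n : ℕ ↦ (n : ℝ) * g n).sum
  have hG := hasFPowerSeriesOnBall_ofScalars_sum hM hg
  have hH : HasFPowerSeriesOnBall H (ofScalars ℝ fun n : ℕ ↦ (n : ℝ) * g n) 0
      (ENNReal.ofReal (2 * M)⁻¹) := by
    refine hasFPowerSeriesOnBall_ofScalars_sum (by positivity) fun n ↦ ?_
    rw [abs_mul, Nat.abs_cast, mul_pow]
    gcongr
    · exact_mod_cast (Nat.lt_two_pow_self).le
    · exact hg n
  have hsub : Metric.ball (0 : ℝ) (2 * M)⁻¹ ⊆ Metric.ball 0 M⁻¹ :=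
    Metric.ball_subset_ball (by gcongr; linarith)
  -- `H` is the Euler operator `s ↦ s * G' s` applied to `G`
  have hHG : Set.EqOn H (fun s ↦ s * deriv G s) (Metric.ball 0 (2 * M)⁻¹) := fun s hs ↦ by
    have hHs := hH.hasSum (by rwa [Metric.eball_ofReal])
    simp only [ofScalars_apply_eq, smul_eq_mul, zero_add] at hHs
    exact hHs.unique (hG.hasSum_natCast_mul (by rw [Metric.eball_ofReal]; exact hsub hs))
  have htmem : t ∈ Metric.ball (0 : ℝ) (2 * M)⁻¹ := by simpa using ht
  have hG' : DifferentiableAt ℝ (deriv G) t :=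
    (hG.analyticOnNhd.deriv t (by rw [Metric.eball_ofReal]; exact hsub htmem)).differentiableAt
  have hderivH : deriv H t = deriv G t + t * deriv (deriv G) t := by
    have hprod : HasDerivAt (fun s ↦ s * deriv G s) (1 * deriv G t + t * deriv (deriv G) t) t :=
      (hasDerivAt_id' t).mul hG'.hasDerivAt
    rw [(hHG.eventuallyEq_of_mem (Metric.isOpen_ball.mem_nhds htmem)).deriv_eq, hprod.deriv,
      one_mul]
  have hHt := hH.hasSum_natCast_mul (by rwa [Metric.eball_ofReal])
  rw [hderivH] at hHt
  convert hHt using 1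
  · funext n; ring
  · ring

lemma ofScalars_sum_solves_euler_ode {a : ℕ → ℝ} {c₁ c₂ M t y : ℝ} (hM : 0 < M)
    (hg : ∀ n, |g n| ≤ M ^ n)
    (hrec : ∀ n : ℕ, (c₂ * n ^ 2 + c₁ * n) * g n = ∑ m ∈ range (n + 1), a m * g (n - m))
    (ht : |t| < (2 * M)⁻¹) (ha : HasSum (fun m ↦ a m * t ^ m) y)
    (ha' : Summable fun m ↦ ‖a m * t ^ m‖) :
    c₂ * (t * deriv (ofScalars ℝ g).sum t + t ^ 2 * deriv (deriv (ofScalars ℝ g).sum) t)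
      + c₁ * (t * deriv (ofScalars ℝ g).sum t) = y * (ofScalars ℝ g).sum t := by
  have hG := hasFPowerSeriesOnBall_ofScalars_sum hM hg
  have htM' : |t| < M⁻¹ := ht.trans_le (inv_anti₀ hM (by linarith))
  have htM : M * |t| < 1 := by
    simpa [mul_inv_cancel₀ hM.ne'] using mul_lt_mul_of_pos_left htM' hM
  have htmem : t ∈ Metric.eball (0 : ℝ) (ENNReal.ofReal M⁻¹) := by
    simpa [Metric.eball_ofReal] using htM'
  have hgt := hG.hasSum htmem
  simp only [ofScalars_apply_eq, smul_eq_mul, zero_add] at hgt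
  have hlhs := ((hasSum_natCast_sq_mul_ofScalars_sum hM hg ht).mul_left c₂).add
    ((hG.hasSum_natCast_mul htmem).mul_left c₁)
  rw [← ha.tsum_eq, ← hgt.tsum_eq, tsum_mul_tsum_eq_tsum_sum_range_of_summable_norm ha'
    (summable_norm_mul_pow_of_abs_le hM.le (C := 1) (by simpa using hg) htM), ← hlhs.tsum_eq]
  refine tsum_congr fun n ↦ ?_
  rw [show c₂ * (n ^ 2 * g n * t ^ n) + c₁ * (n * g n * t ^ n)
      = (c₂ * n ^ 2 + c₁ * n) * g n * t ^ n by ring, hrec, sum_mul]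
  refine sum_congr rfl fun k hk ↦ ?_
  rw [← Nat.add_sub_of_le (Nat.lt_succ_iff.mp (mem_range.mp hk)), pow_add,
    Nat.add_sub_cancel_left]
  ring

end EulerOperator

lemma AnalyticAt.exists_hasSum_pow {f : ℝ → ℝ} (hf : AnalyticAt ℝ f 0) :
    ∃ (a : ℕ → ℝ) (C ρ : ℝ), 0 < ρ ∧ (∀ m, |a m| ≤ C * ρ⁻¹ ^ m) ∧
      ∀ t, |t| < ρ → HasSum (fun m ↦ a m * t ^ m) (f t) := by
  obtain ⟨p, r, hp⟩ := hf
  obtain ⟨ρ, hρ, hρr⟩ := ENNReal.lt_iff_exists_nnreal_btwn.mp hp.r_pos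
  obtain ⟨C, -, hC⟩ := p.norm_mul_pow_le_of_lt_radius (hρr.trans_le hp.r_le)
  have hρ' : (0 : ℝ) < ρ := NNReal.coe_pos.mpr (ENNReal.coe_pos.mp hρ)
  refine ⟨p.coeff, C, ρ, hρ', fun m ↦ ?_, fun t ht ↦ ?_⟩
  · rw [inv_pow, ← div_eq_mul_inv, le_div_iff₀ (by positivity), ← Real.norm_eq_abs,
      ← norm_apply_eq_norm_coef]
    exact hC m
  · have htr : t ∈ Metric.eball (0 : ℝ) r := by
      refine Metric.eball_subset_eball hρr.le ?_
      rw [← ENNReal.ofReal_coe_nnreal, Metric.eball_ofReal]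
      simpa using ht
    simpa [apply_eq_pow_smul_coeff, mul_comm] using hp.hasSum htr

lemma hasDerivAt_rpow_mul_comp_rpow {α β x G' : ℝ} {G : ℝ → ℝ} (hx : 0 < x)
    (hG : HasDerivAt G G' (x ^ β)) :
    HasDerivAt (fun y ↦ y ^ α * G (y ^ β))
      (x ^ (α - 1) * (α * G (x ^ β) + β * (x ^ β * G'))) x := by
  have h : HasDerivAt (fun y ↦ y ^ α * G (y ^ β))
      (α * x ^ (α - 1) * G (x ^ β) + x ^ α * (G' * (β * x ^ (β - 1)))) x :=
    (hasDerivAt_rpow_const (Or.inl hx.ne')).mul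
      (hG.comp x (hasDerivAt_rpow_const (Or.inl hx.ne')))
  have hpow : x ^ α * x ^ (β - 1) = x ^ (α - 1) * x ^ β := by
    rw [← rpow_add hx, ← rpow_add hx]; ring_nf
  convert h using 1
  linear_combination (-β * G') * hpow

lemma deriv_deriv_rpow_mul_comp_rpow {α β x : ℝ} {G : ℝ → ℝ} (hx : 0 < x)
    (hG : ∀ᶠ u in 𝓝 (x ^ β), DifferentiableAt ℝ G u)
    (hG' : DifferentiableAt ℝ (deriv G) (x ^ β)) :
    deriv (deriv fun y ↦ y ^ α * G (y ^ β)) x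
      = x ^ (α - 2) * (α * (α - 1) * G (x ^ β)
        + β * (2 * α + β - 1) * (x ^ β * deriv G (x ^ β))
        + β ^ 2 * ((x ^ β) ^ 2 * deriv (deriv G) (x ^ β))) := by
  set t := x ^ β
  set H : ℝ → ℝ := fun u ↦ α * G u + β * (u * deriv G u)
  -- the first derivative has the same shape, with `α - 1` and `H` in place of `α` and `G`
  have hfirst : deriv (fun y ↦ y ^ α * G (y ^ β)) =ᶠ[𝓝 x]
      fun y ↦ y ^ (α - 1) * H (y ^ β) := by
    have hcont : Tendsto (fun y ↦ y ^ β) (𝓝 x) (𝓝 t) :=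
      (continuousAt_rpow_const x β (Or.inl hx.ne')).tendsto
    filter_upwards [hcont.eventually hG, lt_mem_nhds hx] with y hy hy0
    exact (hasDerivAt_rpow_mul_comp_rpow hy0 hy.hasDerivAt).deriv
  have hH : HasDerivAt H (α * deriv G t + β * (1 * deriv G t + t * deriv (deriv G) t)) t :=
    (hG.self_of_nhds.hasDerivAt.const_mul α).add
      (((hasDerivAt_id' t).mul hG'.hasDerivAt).const_mul β)
  rw [hfirst.deriv_eq, (hasDerivAt_rpow_mul_comp_rpow (α := α - 1) hx hH).deriv, sub_sub,
    one_add_one_eq_two]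
  ring

theorem exists_analyticAt_solution_euler_ode {f : ℝ → ℝ} (hf : AnalyticAt ℝ f 0)
    (hf0 : f 0 = 0) {c₁ c₂ : ℝ} (hc₁ : 0 ≤ c₁) (hc₂ : 0 < c₂) :
    ∃ ε > 0, ∃ G : ℝ → ℝ, G 0 = 1 ∧ (∀ t, |t| < ε → AnalyticAt ℝ G t) ∧
      ∀ t, |t| < ε →
        c₂ * (t * deriv G t + t ^ 2 * deriv (deriv G) t) + c₁ * (t * deriv G t) = f t * G t := by
  obtain ⟨a, C, ρ, hρ, ha, hfa⟩ := hf.exists_hasSum_pow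
  have ha0 : a 0 = 0 := by
    have h0 : HasSum (fun m ↦ a m * 0 ^ m) (a 0) := by
      simpa using hasSum_single (f := fun m ↦ a m * (0 : ℝ) ^ m) 0 fun m hm ↦ by simp [hm]
    rw [h0.unique (hfa 0 (by simpa using hρ)), hf0]
  set D : ℕ → ℝ := fun n ↦ c₂ * n ^ 2 + c₁ * n
  have hD : ∀ n : ℕ, c₂ ≤ D (n + 1) := fun n ↦ by
    have hn : (0 : ℝ) ≤ n := n.cast_nonneg
    simp only [D]; push_cast
    nlinarith [mul_nonneg hc₂.le (by positivity : (0 : ℝ) ≤ n ^ 2 + 2 * n),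
      mul_nonneg hc₁ (by positivity : (0 : ℝ) ≤ n + 1)]
  set M := max (2 * ρ⁻¹) (2 * C * ρ⁻¹ / c₂)
  have hM : 0 < M := lt_max_of_lt_left (by positivity)
  have hg : ∀ n, |frobeniusCoeff a D n| ≤ M ^ n :=
    abs_frobeniusCoeff_le_pow (by positivity) hc₂ ha hD (le_max_left _ _) (le_max_right _ _)
  have hrec := mul_frobeniusCoeff ha0 (by simp [D]) fun n ↦ (hc₂.trans_le (hD n)).ne'
  have hG := hasFPowerSeriesOnBall_ofScalars_sum hM hg
  refine ⟨min (2 * M)⁻¹ ρ, by positivity, _,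
    (ofScalarsSum_zero (E := ℝ) _).trans (by simp), fun t ht ↦ hG.analyticOnNhd t ?_,
    fun t ht ↦ ?_⟩
  · rw [Metric.eball_ofReal, mem_ball_zero_iff, Real.norm_eq_abs]
    exact (lt_min_iff.mp ht).1.trans_le (inv_anti₀ hM (by linarith))
  · obtain ⟨htM, htρ⟩ := lt_min_iff.mp ht
    refine ofScalars_sum_solves_euler_ode hM hg hrec htM (hfa t htρ)
      (summable_norm_mul_pow_of_abs_le (by positivity) ha ?_)
    rwa [inv_mul_lt_one₀ hρ]

/-- first half of Lemma 1: for the potential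
`V(x) = x⁻²(K + f(x^β))` with `4K + 1 > 0`, `β > 0` and `f` analytic with `f(0) = 0`,
there is a Frobenius solution `φ₁(x) = x^{α₊} G(x^β)` of `-y'' + V y = 0` near `x = 0`,
where `α₊ = (1 + √(4K+1))/2` and `G` is analytic with `G(0) = 1`. -/
theorem stmt_13 (K β : ℝ) (hβ : 0 < β) (hK : 0 < 4 * K + 1)
    (αp : ℝ) (hαp : αp = (1 + Real.sqrt (4 * K + 1)) / 2)
    (f : ℝ → ℝ) (hf : AnalyticAt ℝ f 0) (hf0 : f 0 = 0)
    (δ : ℝ) (hδ : 0 < δ)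
    (V : ℝ → ℝ) (hV : ∀ x ∈ Set.Ioo (0:ℝ) δ, V x = (K + f (x ^ β)) / x ^ 2) :
    ∃ δ' : ℝ, 0 < δ' ∧ δ' ≤ δ ∧
      ∃ G : ℝ → ℝ, AnalyticAt ℝ G 0 ∧ G 0 = 1 ∧
        ∀ x ∈ Set.Ioo (0:ℝ) δ',
          -(deriv (deriv (fun y => y ^ αp * G (y ^ β))) x)
            + V x * (x ^ αp * G (x ^ β)) = 0 := by
  have hαK : αp * (αp - 1) = K := by rw [hαp]; nlinarith [Real.sq_sqrt hK.le]
  have hα : 2 * αp - 1 = √(4 * K + 1) := by rw [hαp]; ring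
  obtain ⟨ε, hε, G, hG0, hG, hGode⟩ := exists_analyticAt_solution_euler_ode hf hf0
    (c₁ := β * √(4 * K + 1)) (c₂ := β ^ 2) (by positivity) (by positivity)
  refine ⟨min δ (ε ^ β⁻¹), by positivity, min_le_left _ _, G, hG 0 (by simpa), hG0,
    fun x ⟨hx, hxδ'⟩ ↦ ?_⟩
  have hxε : |x ^ β| < ε := by
    rw [abs_of_pos (rpow_pos_of_pos hx β), ← rpow_inv_rpow hε.le hβ.ne']
    exact rpow_lt_rpow hx.le (hxδ'.trans_le (min_le_right _ _)) hβ
  rw [deriv_deriv_rpow_mul_comp_rpow hx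
      ((hG _ hxε).eventually_analyticAt.mono fun u hu ↦ hu.differentiableAt)
      ((hG _ hxε).deriv.differentiableAt),
    hV x ⟨hx, hxδ'.trans_le (min_le_left _ _)⟩]
  have hxα : x ^ αp = x ^ (αp - 2) * x ^ 2 := by
    rw [← rpow_natCast, ← rpow_add hx]; norm_num
  have hVφ : (K + f (x ^ β)) / x ^ 2 * (x ^ (αp - 2) * x ^ 2 * G (x ^ β))
      = x ^ (αp - 2) * ((K + f (x ^ β)) * G (x ^ β)) := by
    field_simp
  rw [hxα, hVφ]
  linear_combination -(x ^ (αp - 2) * G (x ^ β)) * hαK - x ^ (αp - 2) * hGode _ hxε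
    - (x ^ (αp - 2) * β * x ^ β * deriv G (x ^ β)) * hα
end

section
/- Under the hypotheses on ρ̄ below, define ζ(z) = ∫₀^z √(μ(z')/ρ̄(z')) dz' and ζ₊ = ∫₀^{z₊} √(μ/ρ̄) dz (finite). Let G be a real-analytic function on a neighborhood of 0 with G(0) = 1, and suppose υ : (0, ζ₊) → ℝ satisfies υ(s) = (ζ₊ − s)^{(2ν−1)/2} G((ζ₊ − s)²) for s in a left neighborhood of ζ₊. Then there exists a constant κ > 0, depending only on ν, g, l and C, such that the function w(z) := κ (ρ̄(z) μ(z))^{−1/4} υ(ζ(z)) satisfies w(z) → 1 as z → z₊⁻. -/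
open Set Filter MeasureTheory intervalIntegral

private lemma rpow_half_int {zp c : ℝ} :
    IntervalIntegrable (fun s => (zp - s) ^ (-(1:ℝ)/2)) volume c zp := by
  have h := intervalIntegrable_rpow' (a := zp - c) (b := zp - zp) (r := -(1:ℝ)/2) (by norm_num)
  have h2 := h.comp_sub_left zp
  simpa using h2

private lemma integral_rpow_half {zp z : ℝ} (h : z ≤ zp) :
    (∫ s in z..zp, (zp - s) ^ (-(1:ℝ)/2)) = 2 * Real.sqrt (zp - z) := by
  have h1 : (∫ s in z..zp, (zp - s) ^ (-(1:ℝ)/2))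
      = ∫ x in zp - zp..zp - z, x ^ (-(1:ℝ)/2) :=
    intervalIntegral.integral_comp_sub_left (fun x => x ^ (-(1:ℝ)/2)) zp
  rw [h1, sub_self, integral_rpow (Or.inl (by norm_num))]
  rw [Real.zero_rpow (by norm_num), Real.sqrt_eq_rpow]
  norm_num
  ring

private lemma sqrt_mul_rpow {zp s : ℝ} (hs : s < zp) (x : ℝ) :
    x * Real.sqrt (zp - s) * (zp - s) ^ (-(1:ℝ)/2) = x := by
  have h0 : (0:ℝ) < zp - s := by linarith
  rw [Real.sqrt_eq_rpow, mul_assoc, ← Real.rpow_add h0]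
  norm_num

private lemma aux_int {zp L : ℝ} {f : ℝ → ℝ} (hzp : 0 < zp) (hL : 0 < L)
    (hcont : ContinuousOn f (Set.Ico 0 zp))
    (hasym : Filter.Tendsto (fun s => f s * Real.sqrt (zp - s)) (nhdsWithin zp (Set.Iio zp))
      (nhds L)) :
    (∀ a ∈ Set.Icc (0:ℝ) zp, IntervalIntegrable f volume a zp) ∧
    Filter.Tendsto (fun z => (∫ s in z..zp, f s) / Real.sqrt (zp - z))
      (nhdsWithin zp (Set.Iio zp)) (nhds (2 * L)) := by
  have hev : ∀ ε > (0:ℝ), ∃ δ > (0:ℝ), δ ≤ zp ∧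
      ∀ s ∈ Set.Ioo (zp - δ) zp, |f s * Real.sqrt (zp - s) - L| ≤ ε := by
    intro ε hε
    have h1 : ∀ᶠ s in nhdsWithin zp (Set.Iio zp), |f s * Real.sqrt (zp - s) - L| < ε := by
      have := Metric.tendsto_nhds.mp hasym ε hε
      simpa [Real.dist_eq] using this
    rw [eventually_iff, mem_nhdsLT_iff_exists_Ioo_subset] at h1
    obtain ⟨l, hl, hsub⟩ := h1
    refine ⟨min (zp - l) zp, lt_min (by simp at hl; linarith) hzp, min_le_right _ _, ?_⟩
    intro s hs
    have : s ∈ Set.Ioo l zp := ⟨by have := hs.1; have := min_le_left (zp - l) zp; simp at this ⊢; linarith [hs.1, min_le_left (zp - l) zp], hs.2⟩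
    exact le_of_lt (hsub this)
  obtain ⟨δ₁, hδ₁pos, hδ₁le, hδ₁⟩ := hev L hL
  have hrestr : ∀ c : ℝ, volume.restrict (Set.Ioc c zp) = volume.restrict (Set.Ioo c zp) :=
    fun c => (Measure.restrict_congr_set Ioo_ae_eq_Ioc).symm
  have hint_tail : ∀ c ∈ Set.Ico (zp - δ₁) zp, IntervalIntegrable f volume c zp := by
    intro c hc
    have hcle : c ≤ zp := le_of_lt hc.2
    have hc0 : (0:ℝ) ≤ c := by have := hc.1; linarith
    have hsub : Set.Ioo c zp ⊆ Set.Ico 0 zp := fun s hs => ⟨by linarith [hs.1], hs.2⟩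
    have hmaj : IntervalIntegrable (fun s => 2 * L * (zp - s) ^ (-(1:ℝ)/2)) volume c zp :=
      rpow_half_int.const_mul _
    refine hmaj.mono_fun ?_ ?_
    · rw [uIoc_of_le hcle, hrestr c]
      exact (hcont.mono hsub).aestronglyMeasurable measurableSet_Ioo
    · rw [uIoc_of_le hcle, hrestr c]
      refine (ae_restrict_iff' measurableSet_Ioo).2 (ae_of_all _ fun s hs => ?_)
      have hs' : s ∈ Set.Ioo (zp - δ₁) zp := ⟨by linarith [hs.1, hc.1], hs.2⟩
      have h0 : (0:ℝ) < zp - s := by linarith [hs.2]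
      have hb := hδ₁ s hs'
      have habs : |f s * Real.sqrt (zp - s)| ≤ 2 * L := by
        have := abs_sub_abs_le_abs_sub (f s * Real.sqrt (zp - s)) L
        rw [abs_of_pos hL] at this; linarith
      have hfs : |f s| ≤ 2 * L * (zp - s) ^ (-(1:ℝ)/2) := by
        calc |f s| = |f s * Real.sqrt (zp - s) * (zp - s) ^ (-(1:ℝ)/2)| := by
              rw [sqrt_mul_rpow hs.2]
          _ = |f s * Real.sqrt (zp - s)| * (zp - s) ^ (-(1:ℝ)/2) := by
              rw [abs_mul, abs_of_nonneg (Real.rpow_nonneg (le_of_lt h0) _)]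
          _ ≤ 2 * L * (zp - s) ^ (-(1:ℝ)/2) := by
              exact mul_le_mul_of_nonneg_right habs (Real.rpow_nonneg (le_of_lt h0) _)
      have : (0:ℝ) ≤ 2 * L * (zp - s) ^ (-(1:ℝ)/2) :=
        mul_nonneg (by linarith) (Real.rpow_nonneg (le_of_lt h0) _)
      show ‖f s‖ ≤ ‖2 * L * (zp - s) ^ (-(1:ℝ)/2)‖
      rw [Real.norm_eq_abs, Real.norm_eq_abs, abs_of_nonneg this]
      exact hfs
  have hint_all : ∀ a ∈ Set.Icc (0:ℝ) zp, IntervalIntegrable f volume a zp := by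
    intro a ha
    rcases eq_or_lt_of_le ha.2 with rfl | hlt
    · exact IntervalIntegrable.refl
    · set c := max a (zp - δ₁/2) with hc
      have hac : a ≤ c := le_max_left _ _
      have hczp : c < zp := by
        rw [hc]; exact max_lt hlt (by linarith)
      have h1 : IntervalIntegrable f volume a c := by
        apply ContinuousOn.intervalIntegrable
        rw [uIcc_of_le hac]
        exact hcont.mono (fun s hs => ⟨le_trans ha.1 hs.1, lt_of_le_of_lt hs.2 hczp⟩)
      have h2 : IntervalIntegrable f volume c zp :=
        hint_tail c ⟨by rw [hc]; calc zp - δ₁ ≤ zp - δ₁/2 := by linarith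
                                  _ ≤ c := le_max_right _ _, hczp⟩
      exact h1.trans h2
  refine ⟨hint_all, ?_⟩
  rw [Metric.tendsto_nhds]
  intro ε hε
  obtain ⟨δ₂, hδ₂pos, hδ₂le, hδ₂⟩ := hev (ε/3) (by positivity)
  have hmem : Set.Ioo (zp - min δ₁ δ₂) zp ∈ nhdsWithin zp (Set.Iio zp) :=
    Ioo_mem_nhdsLT_of_mem ⟨by have := lt_min hδ₁pos hδ₂pos; linarith, le_refl zp⟩
  filter_upwards [hmem] with z hz
  have h0 : (0:ℝ) < zp - z := by linarith [hz.2]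
  have hz1 : zp - δ₁ < z := by linarith [hz.1, min_le_left δ₁ δ₂]
  have hz2 : zp - δ₂ < z := by linarith [hz.1, min_le_right δ₁ δ₂]
  have hInt_f : IntervalIntegrable f volume z zp := hint_tail z ⟨le_of_lt hz1, hz.2⟩
  have hIntr : IntervalIntegrable (fun s => L * (zp - s) ^ (-(1:ℝ)/2)) volume z zp :=
    rpow_half_int.const_mul _
  have hsplit : (∫ s in z..zp, f s) - 2 * L * Real.sqrt (zp - z)
      = ∫ s in z..zp, (f s - L * (zp - s) ^ (-(1:ℝ)/2)) := by
    rw [intervalIntegral.integral_sub hInt_f hIntr, intervalIntegral.integral_const_mul,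
      integral_rpow_half (le_of_lt hz.2)]
    ring
  have hbnd : ‖∫ s in z..zp, (f s - L * (zp - s) ^ (-(1:ℝ)/2))‖
      ≤ |∫ s in z..zp, (ε/3) * (zp - s) ^ (-(1:ℝ)/2)| := by
    refine intervalIntegral.norm_integral_le_abs_of_norm_le ?_ (rpow_half_int.const_mul _)
    rw [uIoc_of_le (le_of_lt hz.2), hrestr z]
    refine (ae_restrict_iff' measurableSet_Ioo).2 (ae_of_all _ fun s hs => ?_)
    have hs' : s ∈ Set.Ioo (zp - δ₂) zp := ⟨by linarith [hs.1], hs.2⟩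
    have h0s : (0:ℝ) < zp - s := by linarith [hs.2]
    have hb := hδ₂ s hs'
    have hfact : f s - L * (zp - s) ^ (-(1:ℝ)/2)
        = (f s * Real.sqrt (zp - s) - L) * (zp - s) ^ (-(1:ℝ)/2) := by
      rw [sub_mul, sqrt_mul_rpow hs.2]
    rw [Real.norm_eq_abs, hfact, abs_mul, abs_of_nonneg (Real.rpow_nonneg (le_of_lt h0s) _)]
    exact mul_le_mul_of_nonneg_right hb (Real.rpow_nonneg (le_of_lt h0s) _)
  have hRHS : |∫ s in z..zp, (ε/3) * (zp - s) ^ (-(1:ℝ)/2)| = (ε/3) * (2 * Real.sqrt (zp - z)) := by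
    rw [intervalIntegral.integral_const_mul, integral_rpow_half (le_of_lt hz.2)]
    rw [abs_of_nonneg (by positivity)]
  have hkey : |(∫ s in z..zp, f s) - 2 * L * Real.sqrt (zp - z)|
      ≤ (ε/3) * (2 * Real.sqrt (zp - z)) := by
    rw [hsplit, ← Real.norm_eq_abs, ← hRHS]; exact hbnd
  have hsq : (0:ℝ) < Real.sqrt (zp - z) := Real.sqrt_pos.mpr h0
  rw [Real.dist_eq]
  have heq : (∫ s in z..zp, f s) / Real.sqrt (zp - z) - 2 * L
      = ((∫ s in z..zp, f s) - 2 * L * Real.sqrt (zp - z)) / Real.sqrt (zp - z) := by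
    field_simp
  rw [heq, abs_div, abs_of_pos hsq, div_lt_iff₀ hsq]
  calc |(∫ s in z..zp, f s) - 2 * L * Real.sqrt (zp - z)|
      ≤ (ε/3) * (2 * Real.sqrt (zp - z)) := hkey
    _ < ε * Real.sqrt (zp - z) := by nlinarith

/-- if the eigenfunction `υ` of the transformed problem behaves like
`υ(s) = (ζp - s)^{(2ν-1)/2} G((ζp - s)²)` near `ζp` (with `G` analytic, `G(0) = 1`),
then there is a constant `κ > 0` such that the corresponding eigenfunction
`w(z) = κ (ρ(z) μ(z))^{-1/4} υ(ζ(z))` of the Taylor–Goldstein equation tends to `1`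
at the vacuum boundary `z → zp⁻`. -/
theorem stmt_17 (g l ν C zp : ℝ)
    (hg : 0 < g) (hl : 0 < l) (hν : 1 < ν) (hC : 0 < C) (hzp : 0 < zp)
    (Λ : ℝ → ℝ) (hΛ : AnalyticAt ℝ Λ 0) (hΛ0 : Λ 0 = 0)
    (ρ : ℝ → ℝ)
    (hρsm : ContDiffOn ℝ (⊤ : ℕ∞) ρ (Set.Ico 0 zp))
    (hρpos : ∀ z ∈ Set.Ico (0:ℝ) zp, 0 < ρ z)
    (hρneg : ∀ z ∈ Set.Ico (0:ℝ) zp, deriv ρ z < 0)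
    (hρform : ∃ ε > 0, ∀ z ∈ Set.Ioo (zp - ε) zp,
      ρ z = C * (zp - z) ^ ν * (1 + Λ (zp - z)))
    (μ : ℝ → ℝ) (hμ : ∀ z, μ z = -(g * l ^ 2 * deriv ρ z))
    (ζ : ℝ → ℝ) (hζ : ∀ z, ζ z = ∫ t in (0:ℝ)..z, Real.sqrt (μ t / ρ t))
    (ζp : ℝ) (hζp : ζp = ∫ t in (0:ℝ)..zp, Real.sqrt (μ t / ρ t))
    (G : ℝ → ℝ) (hG : AnalyticAt ℝ G 0) (hG0 : G 0 = 1)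
    (υ : ℝ → ℝ)
    (hυ : ∃ ε > 0, ∀ s ∈ Set.Ioo (ζp - ε) ζp,
      υ s = (ζp - s) ^ ((2*ν - 1) / 2) * G ((ζp - s) ^ 2)) :
    ∃ κ : ℝ, 0 < κ ∧
      Filter.Tendsto (fun z => κ * (ρ z * μ z) ^ (-(1:ℝ)/4) * υ (ζ z))
        (nhdsWithin zp (Set.Iio zp)) (nhds 1) := by
  obtain ⟨ε₁, hε₁pos, hε₁⟩ := hρform
  obtain ⟨ε₂, hε₂pos, hε₂⟩ := hυ
  -- analytic neighborhood of Λ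
  obtain ⟨r, hrpos, hr⟩ : ∃ r > (0:ℝ), ∀ t : ℝ, |t| < r → AnalyticAt ℝ Λ t := by
    have h := hΛ.eventually_analyticAt
    rw [Metric.eventually_nhds_iff] at h
    obtain ⟨r, hrpos, hr⟩ := h
    exact ⟨r, hrpos, fun t ht => hr (by simpa [Real.dist_eq] using ht)⟩
  have hAn : AnalyticOnNhd ℝ Λ (Metric.ball (0:ℝ) r) := by
    intro t ht
    exact hr t (by simpa [Real.dist_eq] using ht)
  have hΛ'an : ∀ t : ℝ, |t| < r → AnalyticAt ℝ (deriv Λ) t := by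
    intro t ht
    exact hAn.deriv t (by simpa [Real.dist_eq] using ht)
  have hΛc : ContinuousAt Λ 0 := hΛ.continuousAt
  have hΛ'c : ContinuousAt (deriv Λ) 0 := (hΛ'an 0 (by simpa using hrpos)).continuousAt
  set P : ℝ → ℝ := fun t => ν * (1 + Λ t) + t * deriv Λ t with hPdef
  have hPc : ContinuousAt P 0 :=
    ((continuousAt_const.mul (continuousAt_const.add hΛc))).add
      (continuousAt_id.mul hΛ'c)
  have hP0 : P 0 = ν := by simp [hPdef, hΛ0]
  obtain ⟨δd, hδdpos, hδd⟩ : ∃ δ > (0:ℝ), ∀ t : ℝ, |t| < δ →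
      (1:ℝ)/2 < 1 + Λ t ∧ ν/2 < P t := by
    have e1 : ∀ᶠ t in nhds (0:ℝ), (1:ℝ)/2 < 1 + Λ t := by
      have h : Filter.Tendsto (fun t => 1 + Λ t) (nhds 0) (nhds (1 + Λ 0)) :=
        continuousAt_const.add hΛc
      rw [hΛ0, add_zero] at h
      exact h.eventually_const_lt (by norm_num)
    have e2 : ∀ᶠ t in nhds (0:ℝ), ν/2 < P t := by
      have h : Filter.Tendsto P (nhds 0) (nhds (P 0)) := hPc
      rw [hP0] at h
      exact h.eventually_const_lt (by linarith)
    have h := e1.and e2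
    rw [Metric.eventually_nhds_iff] at h
    obtain ⟨δ, hδpos, hδ⟩ := h
    exact ⟨δ, hδpos, fun t ht => hδ (by simpa [Real.dist_eq] using ht)⟩
  set δ0 : ℝ := min (min ε₁ (r/2)) (min (zp/2) δd) with hδ0def
  have hδ0pos : 0 < δ0 :=
    lt_min (lt_min hε₁pos (by linarith)) (lt_min (by linarith) hδdpos)
  have hδ0ε₁ : δ0 ≤ ε₁ := le_trans (min_le_left _ _) (min_le_left _ _)
  have hδ0r : δ0 < r := lt_of_le_of_lt (le_trans (min_le_left _ _) (min_le_right _ _)) (by linarith)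
  have hδ0zp : δ0 ≤ zp/2 := le_trans (min_le_right _ _) (min_le_left _ _)
  have hδ0d : δ0 ≤ δd := le_trans (min_le_right _ _) (min_le_right _ _)
  have hreg : ∀ z ∈ Set.Ioo (zp - δ0) zp,
      0 < zp - z ∧ zp - z < δ0 ∧ (1:ℝ)/2 < 1 + Λ (zp - z) ∧ ν/2 < P (zp - z)
        ∧ 0 < z := by
    intro z hz
    have h1 : 0 < zp - z := by linarith [hz.2]
    have h2 : zp - z < δ0 := by linarith [hz.1]
    have h3 := hδd (zp - z) (by rw [abs_of_pos h1]; linarith)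
    exact ⟨h1, h2, h3.1, h3.2, by linarith [hδ0zp]⟩
  -- derivative formula
  have hderivρ : ∀ z ∈ Set.Ioo (zp - δ0) zp,
      deriv ρ z = -(C * (zp - z) ^ (ν - 1) * P (zp - z)) := by
    intro z hz
    obtain ⟨ht, htδ, hΛt, hPt, hz0⟩ := hreg z hz
    have hΛdiff : DifferentiableAt ℝ Λ (zp - z) :=
      (hr (zp - z) (by rw [abs_of_pos ht]; linarith)).differentiableAt
    have h1 : HasDerivAt (fun x : ℝ => zp - x) (-1) z := by
      simpa using (hasDerivAt_id z).const_sub zp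
    have h2 : HasDerivAt (fun x => (zp - x) ^ ν) (ν * (zp - z) ^ (ν - 1) * (-1)) z :=
      (Real.hasDerivAt_rpow_const (Or.inl ht.ne')).comp z h1
    have h3 : HasDerivAt (fun x => 1 + Λ (zp - x)) (deriv Λ (zp - z) * (-1)) z :=
      ((hΛdiff.hasDerivAt).comp z h1).const_add 1
    have h4 : HasDerivAt (fun x => C * (zp - x) ^ ν * (1 + Λ (zp - x)))
        (C * (ν * (zp - z) ^ (ν - 1) * (-1)) * (1 + Λ (zp - z))
          + C * (zp - z) ^ ν * (deriv Λ (zp - z) * (-1))) z :=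
      (h2.const_mul C).mul h3
    have hveq : ρ =ᶠ[nhds z] fun x => C * (zp - x) ^ ν * (1 + Λ (zp - x)) := by
      have hmem : Set.Ioo (zp - δ0) zp ∈ nhds z := isOpen_Ioo.mem_nhds hz
      filter_upwards [hmem] with x hx
      exact hε₁ x ⟨by linarith [hx.1, hδ0ε₁], hx.2⟩
    have h5 := h4.congr_of_eventuallyEq hveq
    rw [h5.deriv]
    have htν : (zp - z) ^ ν = (zp - z) ^ (ν - 1) * (zp - z) := by
      rw [← Real.rpow_add_one ht.ne' (ν - 1)]
      norm_num
    rw [htν, hPdef]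
    ring
  -- formulas for μ and ρ on region
  have hμf : ∀ z ∈ Set.Ioo (zp - δ0) zp,
      μ z = g * l ^ 2 * C * (zp - z) ^ (ν - 1) * P (zp - z) := by
    intro z hz; rw [hμ z, hderivρ z hz]; ring
  have hρf : ∀ z ∈ Set.Ioo (zp - δ0) zp, ρ z = C * (zp - z) ^ ν * (1 + Λ (zp - z)) :=
    fun z hz => hε₁ z ⟨by linarith [hz.1, hδ0ε₁], hz.2⟩
  have hμposreg : ∀ z ∈ Set.Ioo (zp - δ0) zp, 0 < μ z := by
    intro z hz
    obtain ⟨ht, htδ, hΛt, hPt, hz0⟩ := hreg z hz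
    rw [hμf z hz]
    have h1 : (0:ℝ) < (zp - z) ^ (ν - 1) := Real.rpow_pos_of_pos ht _
    have h2 : (0:ℝ) < P (zp - z) := lt_trans (by linarith : (0:ℝ) < ν / 2) hPt
    exact mul_pos (mul_pos (mul_pos (mul_pos hg (pow_pos hl 2)) hC) h1) h2
  -- continuity of deriv ρ and f on Ico
  have hdiffρ : ∀ z ∈ Set.Ico (0:ℝ) zp, DifferentiableAt ℝ ρ z := by
    intro z hz
    by_contra h
    have := hρneg z hz
    rw [deriv_zero_of_not_differentiableAt h] at this
    exact lt_irrefl 0 this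
  have hud : UniqueDiffOn ℝ (Set.Ico (0:ℝ) zp) := uniqueDiffOn_Ico 0 zp
  have hderivcont : ContinuousOn (deriv ρ) (Set.Ico 0 zp) := by
    have h1 : ContinuousOn (derivWithin ρ (Set.Ico 0 zp)) (Set.Ico 0 zp) :=
      hρsm.continuousOn_derivWithin hud (by simp)
    exact h1.congr fun z hz => ((hdiffρ z hz).derivWithin (hud z hz)).symm
  have hμcont : ContinuousOn μ (Set.Ico 0 zp) := by
    have h : μ = fun z => -(g * l ^ 2 * deriv ρ z) := funext hμ
    rw [h]
    exact (continuousOn_const.mul hderivcont).neg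
  set f : ℝ → ℝ := fun s => Real.sqrt (μ s / ρ s) with hfdef
  have hfcont : ContinuousOn f (Set.Ico 0 zp) :=
    Real.continuous_sqrt.comp_continuousOn
      (hμcont.div hρsm.continuousOn (fun z hz => (hρpos z hz).ne'))
  set L : ℝ := Real.sqrt (g * l ^ 2 * ν) with hLdef
  have hLpos : 0 < L := Real.sqrt_pos.mpr (by positivity)
  have hmemδ0 : Set.Ioo (zp - δ0) zp ∈ nhdsWithin zp (Set.Iio zp) :=
    Ioo_mem_nhdsLT_of_mem ⟨by linarith, le_refl zp⟩
  have h_tend_t : Filter.Tendsto (fun z => zp - z) (nhdsWithin zp (Set.Iio zp)) (nhds 0) := by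
    have h : Filter.Tendsto (fun z : ℝ => zp - z) (nhds zp) (nhds (zp - zp)) :=
      (continuous_const.sub continuous_id).tendsto zp
    rw [sub_self] at h
    exact h.mono_left nhdsWithin_le_nhds
  have hasym : Filter.Tendsto (fun s => f s * Real.sqrt (zp - s))
      (nhdsWithin zp (Set.Iio zp)) (nhds L) := by
    have hQc : ContinuousAt (fun t => Real.sqrt (g * l ^ 2 * P t / (1 + Λ t))) 0 :=
      Real.continuous_sqrt.continuousAt.comp
        ((continuousAt_const.mul hPc).div (continuousAt_const.add hΛc) (by simp [hΛ0]))
    have hQ0 : Real.sqrt (g * l ^ 2 * P 0 / (1 + Λ 0)) = L := by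
      rw [hP0, hΛ0]; simp [hLdef]
    have h1 : Filter.Tendsto (fun s => Real.sqrt (g * l ^ 2 * P (zp - s) / (1 + Λ (zp - s))))
        (nhdsWithin zp (Set.Iio zp)) (nhds L) := by
      rw [← hQ0]; exact hQc.tendsto.comp h_tend_t
    refine Filter.Tendsto.congr' ?_ h1
    filter_upwards [hmemδ0] with s hs
    obtain ⟨ht, htδ, hΛt, hPt, hs0⟩ := hreg s hs
    have hρs : 0 < ρ s := hρpos s ⟨le_of_lt hs0, hs.2⟩
    have hμs : 0 < μ s := hμposreg s hs
    have htp : (0:ℝ) < (zp - s) ^ (ν - 1) := Real.rpow_pos_of_pos ht _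
    have hmain : g * l ^ 2 * P (zp - s) / (1 + Λ (zp - s)) = μ s / ρ s * (zp - s) := by
      rw [hμf s hs, hρf s hs,
        show (zp - s) ^ ν = (zp - s) ^ (ν - 1) * (zp - s) from
          (by rw [← Real.rpow_add_one ht.ne' (ν - 1)]; norm_num)]
      field_simp
    rw [hmain, Real.sqrt_mul (div_nonneg hμs.le hρs.le)]
  obtain ⟨hint, htendb⟩ := aux_int hzp hLpos hfcont hasym
  set b : ℝ → ℝ := fun z => (∫ s in z..zp, f s) / Real.sqrt (zp - z) with hbdef
  have hBeq : ∀ z ∈ Set.Ioo (zp - δ0) zp, ζp - ζ z = ∫ s in z..zp, f s := by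
    intro z hz
    obtain ⟨ht, htδ, _, _, hz0⟩ := hreg z hz
    have h01 : IntervalIntegrable f volume 0 zp := hint 0 ⟨le_refl 0, hzp.le⟩
    have hz1 : IntervalIntegrable f volume z zp := hint z ⟨hz0.le, hz.2.le⟩
    have h0z : IntervalIntegrable f volume 0 z := h01.trans hz1.symm
    have hadd := intervalIntegral.integral_add_adjacent_intervals h0z hz1
    rw [hζ z, hζp]
    linarith [hadd]
  have hbL : ∀ᶠ z in nhdsWithin zp (Set.Iio zp), L < b z :=
    htendb.eventually_const_lt (by linarith)
  have hBten : Filter.Tendsto (fun z => ζp - ζ z) (nhdsWithin zp (Set.Iio zp)) (nhds 0) := by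
    have h1 : Filter.Tendsto (fun z => b z * Real.sqrt (zp - z))
        (nhdsWithin zp (Set.Iio zp)) (nhds (2 * L * Real.sqrt 0)) :=
      htendb.mul ((Real.continuous_sqrt.tendsto 0).comp h_tend_t)
    rw [Real.sqrt_zero, mul_zero] at h1
    refine Filter.Tendsto.congr' ?_ h1
    filter_upwards [hmemδ0] with z hz
    obtain ⟨ht, _, _, _, _⟩ := hreg z hz
    have hsq : Real.sqrt (zp - z) ≠ 0 := (Real.sqrt_pos.mpr ht).ne'
    rw [hBeq z hz, hbdef]
    field_simp
  have hBsmall : ∀ᶠ z in nhdsWithin zp (Set.Iio zp), ζp - ζ z < ε₂ :=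
    hBten.eventually_lt_const hε₂pos
  set e : ℝ := (2 * ν - 1) / 2 with hedef
  set A0 : ℝ := g * l ^ 2 * C ^ 2 * ν with hA0def
  have hA0pos : 0 < A0 := by rw [hA0def]; positivity
  have h2L : (0:ℝ) < 2 * L := by linarith
  set κ : ℝ := A0 ^ ((1:ℝ)/4) / (2 * L) ^ e with hκdef
  have hκpos : 0 < κ := div_pos (Real.rpow_pos_of_pos hA0pos _) (Real.rpow_pos_of_pos h2L _)
  refine ⟨κ, hκpos, ?_⟩
  set a : ℝ → ℝ := fun t => g * l ^ 2 * C ^ 2 * ((1 + Λ t) * P t) with hadef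
  have haten : Filter.Tendsto (fun z => a (zp - z)) (nhdsWithin zp (Set.Iio zp)) (nhds A0) := by
    have hac : ContinuousAt a 0 :=
      continuousAt_const.mul ((continuousAt_const.add hΛc).mul hPc)
    have ha0 : a 0 = A0 := by rw [hadef, hA0def]; simp [hΛ0, hP0]
    rw [← ha0]
    exact hac.tendsto.comp h_tend_t
  have hGc : Filter.Tendsto G (nhds 0) (nhds 1) := by
    rw [← hG0]; exact hG.continuousAt
  have hBsq : Filter.Tendsto (fun z => (ζp - ζ z) ^ 2) (nhdsWithin zp (Set.Iio zp)) (nhds 0) := by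
    have := hBten.pow 2
    simpa using this
  have hEten : Filter.Tendsto
      (fun z => κ * (a (zp - z)) ^ (-(1:ℝ)/4) * ((b z) ^ e * G ((ζp - ζ z) ^ 2)))
      (nhdsWithin zp (Set.Iio zp)) (nhds (κ * A0 ^ (-(1:ℝ)/4) * ((2 * L) ^ e * 1))) :=
    ((haten.rpow_const (Or.inl hA0pos.ne')).const_mul κ).mul
      ((htendb.rpow_const (Or.inl h2L.ne')).mul (hGc.comp hBsq))
  have hval : κ * A0 ^ (-(1:ℝ)/4) * ((2 * L) ^ e * 1) = 1 := by
    rw [mul_one, hκdef]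
    have h1 : A0 ^ ((1:ℝ)/4) * A0 ^ (-(1:ℝ)/4) = 1 := by
      rw [← Real.rpow_add hA0pos]; norm_num
    have h2 : (2 * L) ^ e ≠ 0 := (Real.rpow_pos_of_pos h2L e).ne'
    field_simp
    linarith [h1]
  rw [hval] at hEten
  refine Filter.Tendsto.congr' ?_ hEten
  filter_upwards [hmemδ0, hbL, hBsmall] with z hz hbz hBz
  obtain ⟨ht, htδ, hΛt, hPt, hz0⟩ := hreg z hz
  have hsqpos : 0 < Real.sqrt (zp - z) := Real.sqrt_pos.mpr ht
  have hB : ζp - ζ z = b z * Real.sqrt (zp - z) := by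
    rw [hBeq z hz, hbdef]
    field_simp
  have hbzpos : 0 < b z := lt_trans hLpos hbz
  have hBpos : 0 < ζp - ζ z := by rw [hB]; exact mul_pos hbzpos hsqpos
  have hζz : ζ z ∈ Set.Ioo (ζp - ε₂) ζp := ⟨by linarith, by linarith⟩
  have hυz : υ (ζ z) = (ζp - ζ z) ^ e * G ((ζp - ζ z) ^ 2) := hε₂ (ζ z) hζz
  have hρμ : ρ z * μ z = (zp - z) ^ (2 * ν - 1) * a (zp - z) := by
    rw [hρf z hz, hμf z hz,
      show (zp - z) ^ (2 * ν - 1) = (zp - z) ^ ν * (zp - z) ^ (ν - 1) from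
        (by rw [← Real.rpow_add ht]; ring_nf), hadef]
    ring
  have htpow : (0:ℝ) < (zp - z) ^ (2 * ν - 1) := Real.rpow_pos_of_pos ht _
  have hapos : 0 < a (zp - z) := by
    rw [hadef]
    have hP : (0:ℝ) < P (zp - z) := lt_trans (by linarith : (0:ℝ) < ν / 2) hPt
    have hΛp : (0:ℝ) < 1 + Λ (zp - z) := lt_trans (by norm_num : (0:ℝ) < 1/2) hΛt
    exact mul_pos (mul_pos (mul_pos hg (pow_pos hl 2)) (pow_pos hC 2)) (mul_pos hΛp hP)
  have hsplit1 : (ρ z * μ z) ^ (-(1:ℝ)/4)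
      = (zp - z) ^ ((2 * ν - 1) * (-(1:ℝ)/4)) * (a (zp - z)) ^ (-(1:ℝ)/4) := by
    rw [hρμ, Real.mul_rpow htpow.le hapos.le, Real.rpow_mul ht.le]
  have hsplit2 : (ζp - ζ z) ^ e = (b z) ^ e * (zp - z) ^ ((1:ℝ)/2 * e) := by
    rw [hB, Real.mul_rpow hbzpos.le (Real.sqrt_nonneg _), Real.sqrt_eq_rpow,
      ← Real.rpow_mul ht.le]
  have hcomb : (zp - z) ^ ((2 * ν - 1) * (-(1:ℝ)/4)) * (zp - z) ^ ((1:ℝ)/2 * e) = 1 := by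
    rw [← Real.rpow_add ht, hedef,
      show (2 * ν - 1) * (-(1:ℝ)/4) + (1:ℝ)/2 * ((2 * ν - 1)/2) = 0 by ring, Real.rpow_zero]
  have key : κ * (ρ z * μ z) ^ (-(1:ℝ)/4) * υ (ζ z)
      = κ * (a (zp - z)) ^ (-(1:ℝ)/4) * ((b z) ^ e * G ((ζp - ζ z) ^ 2)) := by
    rw [hυz, hsplit1, hsplit2]
    linear_combination
      (κ * (a (zp - z)) ^ (-(1:ℝ)/4) * (b z) ^ e * G ((ζp - ζ z) ^ 2)) * hcomb
  exact key.symm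
end
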